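/- arXiv:2111.12282 — 12 statements merged into one kernel-verified Lean document; each statement's English description precedes it below -/
import Mathlib

section
/- Let G be a k×n matrix over F_2 and let C be the row space of G. Then C is self-orthogonal if and only if SO_k · ℓ(G)ᵀ = 0, i.e., if and only if for every pair 1 ≤ i ≤ j ≤ k one has Σ_{v ∈ F_2^k, v ≠ 0} v_i v_j ℓ_v(G) = 0 in F_2. -/
/-- The row space of G is self-orthogonal iff SO_k · ℓ(G)ᵀ = 0, i.e., iff
for every pair i ≤ j one has Σ_{v ≠ 0} v i * v j * ℓ_v(G) = 0 in F_2. -/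
theorem stmt_3 (k n : ℕ) (G : Matrix (Fin k) (Fin n) (ZMod 2)) :
    (∀ x ∈ Submodule.span (ZMod 2) (Set.range fun i : Fin k => G i),
      ∀ y ∈ Submodule.span (ZMod 2) (Set.range fun i : Fin k => G i),
        ∑ c, x c * y c = (0 : ZMod 2)) ↔
    (∀ i j : Fin k, i ≤ j →
      ∑ v ∈ Finset.univ.filter (fun v : Fin k → ZMod 2 => v ≠ 0),
        v i * v j *
          ((Finset.univ.filter (fun c : Fin n => (fun t => G t c) = v)).card : ZMod 2)
        = 0) := by
  have key : ∀ i j : Fin k,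
      (∑ v ∈ Finset.univ.filter (fun v : Fin k → ZMod 2 => v ≠ 0),
        v i * v j *
          ((Finset.univ.filter (fun c : Fin n => (fun t => G t c) = v)).card : ZMod 2))
      = ∑ c, G i c * G j c := by
    intro i j
    have h1 : (∑ v ∈ Finset.univ.filter (fun v : Fin k → ZMod 2 => v ≠ 0),
        v i * v j *
          ((Finset.univ.filter (fun c : Fin n => (fun t => G t c) = v)).card : ZMod 2))
        = ∑ v : Fin k → ZMod 2,
        v i * v j *
          ((Finset.univ.filter (fun c : Fin n => (fun t => G t c) = v)).card : ZMod 2) := by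
      apply Finset.sum_filter_of_ne
      intro v _ hv
      rintro rfl
      simp at hv
    rw [h1]
    rw [← Finset.sum_fiberwise (Finset.univ : Finset (Fin n))
      (fun c => (fun t => G t c)) (fun c => G i c * G j c)]
    apply Finset.sum_congr rfl
    intro v _
    rw [Finset.sum_congr rfl (fun c hc => ?_), Finset.sum_const, nsmul_eq_mul, mul_comm]
    simp only [Finset.mem_filter] at hc
    rw [← hc.2]
  have rows : ∀ i, G i ∈ Submodule.span (ZMod 2) (Set.range fun i : Fin k => G i) :=
    fun i => Submodule.subset_span ⟨i, rfl⟩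
  constructor
  · intro h i j _
    rw [key]
    exact h _ (rows i) _ (rows j)
  · intro h
    have h' : ∀ i j : Fin k, ∑ c, G i c * G j c = 0 := by
      intro i j
      rcases le_total i j with hij | hij
      · rw [← key]; exact h i j hij
      · have := h j i hij
        rw [key] at this
        rw [← this]
        exact Finset.sum_congr rfl fun c _ => mul_comm _ _
    have step : ∀ i, ∀ y ∈ Submodule.span (ZMod 2) (Set.range fun i : Fin k => G i),
        ∑ c, G i c * y c = 0 := by
      intro i y hy
      induction hy using Submodule.span_induction with
      | mem z hz => obtain ⟨j, rfl⟩ := hz; exact h' i j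
      | zero => simp
      | add a b _ _ ha hb =>
        simp only [Pi.add_apply, mul_add, Finset.sum_add_distrib, ha, hb, add_zero]
      | smul r a _ ha =>
        have e : ∀ c, G i c * (r • a) c = r * (G i c * a c) := fun c => by
          simp only [Pi.smul_apply, smul_eq_mul]; ring
        rw [Finset.sum_congr rfl fun c _ => e c, ← Finset.mul_sum, ha, mul_zero]
    intro x hx y hy
    induction hx using Submodule.span_induction with
    | mem z hz => obtain ⟨i, rfl⟩ := hz; exact step i y hy
    | zero => simp
    | add a b _ _ ha hb =>
      simp only [Pi.add_apply, add_mul, Finset.sum_add_distrib, ha, hb, add_zero]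
    | smul r a _ ha =>
      have e : ∀ c, (r • a) c * y c = r * (a c * y c) := fun c => by
        simp only [Pi.smul_apply, smul_eq_mul]; ring
      rw [Finset.sum_congr rfl fun c _ => e c, ← Finset.mul_sum, ha, mul_zero]
end

section
/- Let G be a k×n matrix over F_2, let C be the row space of G, and let H be the row space of the self-orthogonality matrix SO_k (a subspace of the space of F_2-valued functions on the nonzero vectors of F_2^k). Then C is self-orthogonal if and only if ℓ(G) belongs to the dual code H^⊥, i.e., Σ_{v≠0} h(v) ℓ_v(G) = 0 in F_2 for every h ∈ H. -/
lemma sum_fiber_aux (k n : ℕ) (G : Matrix (Fin k) (Fin n) (ZMod 2)) (i j : Fin k) :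
    ∑ v : {v : Fin k → ZMod 2 // v ≠ 0},
      (v.1 i * v.1 j) *
        ((Finset.univ.filter (fun c : Fin n => (fun t => G t c) = v.1)).card : ZMod 2)
      = ∑ c, G i c * G j c := by
  classical
  have h1 : ∀ v : {v : Fin k → ZMod 2 // v ≠ 0},
      (v.1 i * v.1 j) *
        ((Finset.univ.filter (fun c : Fin n => (fun t => G t c) = v.1)).card : ZMod 2)
      = ∑ c ∈ Finset.univ.filter (fun c : Fin n => (fun t => G t c) = v.1), G i c * G j c := by
    intro v
    rw [Finset.sum_congr rfl (fun c hc => ?_), Finset.sum_const, nsmul_eq_mul, mul_comm]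
    rw [Finset.mem_filter] at hc
    rw [congrFun hc.2 i, congrFun hc.2 j]
  rw [Finset.sum_congr rfl (fun v _ => h1 v)]
  rw [← Finset.sum_subtype (Finset.univ.filter (fun v : Fin k → ZMod 2 => v ≠ 0))
    (fun v => by simp) (fun v => ∑ c ∈ Finset.univ.filter (fun c : Fin n => (fun t => G t c) = v), G i c * G j c)]
  rw [Finset.sum_fiberwise_eq_sum_filter Finset.univ
    (Finset.univ.filter (fun v : Fin k → ZMod 2 => v ≠ 0))
    (fun c => fun t => G t c) (fun c => G i c * G j c)]
  rw [← Finset.sum_filter_add_sum_filter_not Finset.univ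
    (fun c : Fin n => (fun t => G t c) ∈ Finset.univ.filter (fun v : Fin k → ZMod 2 => v ≠ 0))
    (fun c => G i c * G j c)]
  have h2 : ∑ c ∈ Finset.univ.filter
      (fun c : Fin n => ¬ ((fun t => G t c) ∈ Finset.univ.filter (fun v : Fin k → ZMod 2 => v ≠ 0))),
      G i c * G j c = 0 := by
    apply Finset.sum_eq_zero
    intro c hc
    simp only [Finset.mem_filter, Finset.mem_univ, true_and, not_not] at hc
    rw [show G i c = (fun t => G t c) i from rfl, hc]
    simp
  rw [h2, add_zero]

/-- The row space of G is self-orthogonal iff ℓ(G) lies in the dual of the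
code H generated by the rows of the self-orthogonality matrix SO_k. -/
theorem stmt_4 (k n : ℕ) (G : Matrix (Fin k) (Fin n) (ZMod 2)) :
    (∀ x ∈ Submodule.span (ZMod 2) (Set.range fun i : Fin k => G i),
      ∀ y ∈ Submodule.span (ZMod 2) (Set.range fun i : Fin k => G i),
        ∑ c, x c * y c = (0 : ZMod 2)) ↔
    (∀ h ∈ Submodule.span (ZMod 2)
        {r : {v : Fin k → ZMod 2 // v ≠ 0} → ZMod 2 |
          ∃ i j : Fin k, i ≤ j ∧ r = fun v => v.1 i * v.1 j},
      ∑ v : {v : Fin k → ZMod 2 // v ≠ 0},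
        h v *
          ((Finset.univ.filter (fun c : Fin n => (fun t => G t c) = v.1)).card : ZMod 2)
        = 0) := by
  classical
  have rowmem : ∀ i : Fin k, G i ∈ Submodule.span (ZMod 2) (Set.range fun i : Fin k => G i) :=
    fun i => Submodule.subset_span ⟨i, rfl⟩
  constructor
  · intro H h hh
    induction hh using Submodule.span_induction with
    | mem r hr =>
        obtain ⟨i, j, hij, rfl⟩ := hr
        rw [sum_fiber_aux k n G i j]
        exact H (G i) (rowmem i) (G j) (rowmem j)
    | zero => simp
    | add a b _ _ iha ihb =>
        simp only [Pi.add_apply, add_mul, Finset.sum_add_distrib, iha, ihb, add_zero]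
    | smul a x _ ih =>
        simp only [Pi.smul_apply, smul_eq_mul, mul_assoc, ← Finset.mul_sum, ih, mul_zero]
  · intro H
    have key : ∀ i j : Fin k, ∑ c, G i c * G j c = 0 := by
      intro i j
      rcases le_total i j with hij | hij
      · rw [← sum_fiber_aux k n G i j]
        exact H _ (Submodule.subset_span ⟨i, j, hij, rfl⟩)
      · rw [Finset.sum_congr rfl (fun c _ => mul_comm (G i c) (G j c)),
          ← sum_fiber_aux k n G j i]
        exact H _ (Submodule.subset_span ⟨j, i, hij, rfl⟩)
    have step1 : ∀ x ∈ Submodule.span (ZMod 2) (Set.range fun i : Fin k => G i),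
        ∀ j : Fin k, ∑ c, x c * G j c = 0 := by
      intro x hx
      induction hx using Submodule.span_induction with
      | mem z hz => obtain ⟨i, rfl⟩ := hz; exact fun j => key i j
      | zero => simp
      | add a b _ _ iha ihb =>
          intro j
          simp only [Pi.add_apply, add_mul, Finset.sum_add_distrib, iha j, ihb j, add_zero]
      | smul a x _ ih =>
          intro j
          simp only [Pi.smul_apply, smul_eq_mul, mul_assoc, ← Finset.mul_sum, ih j, mul_zero]
    intro x hx y hy
    induction hy using Submodule.span_induction with
    | mem z hz => obtain ⟨j, rfl⟩ := hz; exact step1 x hx j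
    | zero => simp
    | add a b _ _ iha ihb =>
        simp only [Pi.add_apply, mul_add, Finset.sum_add_distrib, iha, ihb, add_zero]
    | smul a z _ ih =>
        simp only [Pi.smul_apply, smul_eq_mul]
        rw [Finset.sum_congr rfl (fun c _ => mul_left_comm (x c) a (z c)), ← Finset.mul_sum, ih, mul_zero]
end

section
/- Let k ≥ 3. A function w : (F_2^k \ {0}) → F_2 is orthogonal to every row of the self-orthogonality matrix SO_k (i.e., Σ_{v ≠ 0} v_i v_j w(v) = 0 in F_2 for all 1 ≤ i ≤ j ≤ k) if and only if there exists a polynomial f ∈ F_2[x_1,…,x_k] of total degree at most k−3 such that w(v) = f(v) for every nonzero v ∈ F_2^k; that is, the dual of the row space of SO_k is the puncture at the coordinate 0 of the Reed–Muller code R(k−3,k). -/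
open Finset MvPolynomial

namespace Stmt6Aux

variable {k : ℕ}

lemma zmod2_cases (x : ZMod 2) : x = 0 ∨ x = 1 := by revert x; decide

lemma zmod2_mul_self (x : ZMod 2) : x * x = x := by revert x; decide

lemma zmod2_add_self (x : ZMod 2) : x + x = 0 := by revert x; decide

/-- indicator vector of a finset -/
def ind (T : Finset (Fin k)) : Fin k → ZMod 2 := fun i => if i ∈ T then 1 else 0

/-- support finset of a vector -/
def spt (v : Fin k → ZMod 2) : Finset (Fin k) := univ.filter (fun i => v i = 1)

lemma ind_spt (v : Fin k → ZMod 2) : ind (spt v) = v := by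
  funext i
  rcases zmod2_cases (v i) with h | h <;> simp [ind, spt, h]

lemma spt_ind (T : Finset (Fin k)) : spt (ind T) = T := by
  ext i; by_cases h : i ∈ T <;> simp [ind, spt, h]

lemma ind_bij : Function.Bijective (ind (k := k)) :=
  Function.bijective_iff_has_inverse.2 ⟨spt, spt_ind, ind_spt⟩

lemma sum_ind (F : (Fin k → ZMod 2) → ZMod 2) :
    ∑ v : Fin k → ZMod 2, F v = ∑ T : Finset (Fin k), F (ind T) :=
  (Fintype.sum_bijective ind ind_bij _ _ (fun _ => rfl)).symm

lemma prod_ind (S T : Finset (Fin k)) :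
    (∏ i ∈ S, ind T i) = if S ⊆ T then 1 else 0 := by
  by_cases h : S ⊆ T
  · simp only [h, if_true]
    apply Finset.prod_eq_one
    intro i hi
    simp [ind, h hi]
  · simp only [h, if_false]
    obtain ⟨i, hiS, hiT⟩ := Finset.not_subset.1 h
    apply Finset.prod_eq_zero hiS
    simp [ind, hiT]

lemma moebius (g : Finset (Fin k) → ZMod 2) (T : Finset (Fin k)) :
    ∑ S ∈ T.powerset, ∑ U ∈ S.powerset, g U = g T := by
  have h1 : ∀ S ∈ T.powerset, (∑ U ∈ S.powerset, g U)
      = ∑ U ∈ T.powerset, if U ⊆ S then g U else 0 := by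
    intro S hS
    rw [← Finset.sum_filter]
    congr 1
    ext U
    simp only [mem_filter, mem_powerset] at *
    exact ⟨fun h => ⟨h.trans hS, h⟩, fun h => h.2⟩
  rw [Finset.sum_congr rfl h1, Finset.sum_comm]
  have h2 : ∀ U ∈ T.powerset, (∑ S ∈ T.powerset, if U ⊆ S then g U else 0)
      = if U = T then g U else 0 := by
    intro U hU
    rw [mem_powerset] at hU
    rw [← Finset.sum_filter, Finset.sum_const]
    have : T.powerset.filter (fun S => U ⊆ S) = Finset.Icc U T := by
      rw [Finset.Icc_eq_filter_powerset]
    rw [this, Finset.card_Icc_finset hU]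
    by_cases h : U = T
    · subst h; simp
    · have hlt : U.card < T.card := Finset.card_lt_card (lt_of_le_of_ne hU h)
      have : T.card - U.card = (T.card - U.card - 1) + 1 := by omega
      rw [this, pow_succ]
      simp [h, CharTwo.two_eq_zero]
  rw [Finset.sum_congr rfl h2, Finset.sum_ite_eq' T.powerset T g]
  simp

lemma sum_eval_monomial_zero (m : (Fin k) →₀ ℕ) (c : ZMod 2)
    (hm : ∃ i, m i = 0) :
    ∑ v : Fin k → ZMod 2, eval v (monomial m c) = 0 := by
  obtain ⟨i, hi⟩ := hm
  apply Finset.sum_ninvolution (fun v => Function.update v i (v i + 1))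
  · intro v
    have : eval (Function.update v i (v i + 1)) (monomial m c) = eval v (monomial m c) := by
      rw [eval_monomial, eval_monomial]
      congr 1
      apply Finsupp.prod_congr
      intro j hj
      have hji : j ≠ i := by rintro rfl; exact (Finsupp.mem_support_iff.1 hj) hi
      rw [Function.update_of_ne hji]
    rw [this, zmod2_add_self]
  · intro v _ h
    have h2 := congrFun h i
    simp only [Function.update_self] at h2
    have : (1 : ZMod 2) = 0 := by
      have := add_right_cancel (a := (1 : ZMod 2)) (b := v i) (c := 0)
      rw [add_comm] at h2
      exact this (by rw [zero_add]; exact h2)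
    exact one_ne_zero this
  · intro v; exact Finset.mem_univ _
  · intro v
    funext j
    by_cases hj : j = i
    · subst hj
      simp only [Function.update_self]
      rw [add_assoc, zmod2_add_self, add_zero]
    · rw [Function.update_of_ne hj, Function.update_of_ne hj]

/-- key vanishing lemma: sum over all points of a low-degree polynomial is 0 -/
lemma sum_eval_zero (g : MvPolynomial (Fin k) (ZMod 2)) (hg : g.totalDegree < k) :
    ∑ v : Fin k → ZMod 2, eval v g = 0 := by
  have h0 : ∀ v : Fin k → ZMod 2, eval v g = ∑ m ∈ g.support, eval v (monomial m (coeff m g)) := by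
    intro v
    conv_lhs => rw [g.as_sum]
    rw [map_sum]
  rw [Finset.sum_congr rfl fun v _ => h0 v, Finset.sum_comm]
  apply Finset.sum_eq_zero
  intro m hm
  apply sum_eval_monomial_zero
  by_contra hall
  push_neg at hall
  have hsup : m.support = Finset.univ := by
    ext j; simp [Finsupp.mem_support_iff, hall j]
  have hk : k ≤ m.sum fun _ e => e := by
    have h : (m.sum fun _ e => e) = ∑ j ∈ m.support, m j := rfl
    rw [h, hsup]
    calc k = ∑ _j : Fin k, 1 := by simp
    _ ≤ ∑ j : Fin k, m j := Finset.sum_le_sum (fun j _ => Nat.one_le_iff_ne_zero.2 (hall j))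
  have := MvPolynomial.le_totalDegree hm
  omega

lemma sum_subtype_eq (F : (Fin k → ZMod 2) → ZMod 2) (hF0 : F 0 = 0) :
    ∑ v : {v : Fin k → ZMod 2 // v ≠ 0}, F v.1 = ∑ v : Fin k → ZMod 2, F v := by
  rw [← Finset.sum_filter_add_sum_filter_not Finset.univ (fun v => v ≠ 0) F]
  have h1 : ∑ v : {v : Fin k → ZMod 2 // v ≠ 0}, F v.1
      = ∑ v ∈ univ.filter (fun v => v ≠ 0), F v :=
    (Finset.sum_subtype _ (by simp) F).symm
  have h2 : univ.filter (fun v : Fin k → ZMod 2 => ¬ v ≠ 0) = {0} := by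
    ext v; simp
  rw [h1, h2, Finset.sum_singleton, hF0, add_zero]

end Stmt6Aux

open Stmt6Aux

/-- For k ≥ 3, w : (F_2^k \ {0}) → F_2 is orthogonal to every row of SO_k iff
w is the puncture at 0 of an evaluation vector of a polynomial of total
degree at most k − 3, i.e., the dual of the row space of SO_k is the puncture
at the coordinate 0 of the Reed–Muller code R(k−3, k). -/
theorem stmt_6 (k : ℕ) (hk : 3 ≤ k)
    (w : {v : Fin k → ZMod 2 // v ≠ 0} → ZMod 2) :
    (∀ i j : Fin k, i ≤ j →
      ∑ v : {v : Fin k → ZMod 2 // v ≠ 0}, v.1 i * v.1 j * w v = (0 : ZMod 2)) ↔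
    ∃ f : MvPolynomial (Fin k) (ZMod 2), f.totalDegree ≤ k - 3 ∧
      ∀ v : {v : Fin k → ZMod 2 // v ≠ 0}, w v = MvPolynomial.eval v.1 f := by
  classical
  constructor
  · intro horth
    set c : ZMod 2 := ∑ v : {v : Fin k → ZMod 2 // v ≠ 0}, w v with hc
    set W : (Fin k → ZMod 2) → ZMod 2 := fun v => if h : v = 0 then c else w ⟨v, h⟩ with hW
    have hWne : ∀ (v : Fin k → ZMod 2) (hv : v ≠ 0), W v = w ⟨v, hv⟩ := by
      intro v hv; simp [hW, hv]
    have horth' : ∀ i j : Fin k, i ≤ j →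
        ∑ v : Fin k → ZMod 2, v i * v j * W v = 0 := by
      intro i j hij
      rw [← sum_subtype_eq (fun v => v i * v j * W v) (by simp)]
      rw [← horth i j hij]
      apply Finset.sum_congr rfl
      intro v _
      rw [hWne v.1 v.2]
    have hsumW : ∑ v : Fin k → ZMod 2, W v = 0 := by
      have hW0 : ∀ v : Fin k → ZMod 2,
          W v = (if h : v = 0 then 0 else w ⟨v, h⟩) + (if v = 0 then c else 0) := by
        intro v
        by_cases h : v = 0 <;> simp [hW, h]
      rw [Finset.sum_congr rfl fun v _ => hW0 v, Finset.sum_add_distrib]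
      rw [← sum_subtype_eq (fun v => if h : v = 0 then 0 else w ⟨v, h⟩) (by simp)]
      have h3 : ∑ v : {v : Fin k → ZMod 2 // v ≠ 0},
          (if h : v.1 = 0 then 0 else w ⟨v.1, h⟩) = c := by
        rw [hc]
        apply Finset.sum_congr rfl
        intro v _
        simp [v.2]
      rw [h3]
      rw [Finset.sum_ite_eq' Finset.univ (0 : Fin k → ZMod 2) (fun _ => c)]
      simp [zmod2_add_self]
    -- vanishing of high ANF coefficients
    have hQ : ∀ Q : Finset (Fin k), Q.card ≤ 2 →
        ∑ v : Fin k → ZMod 2, (∏ i ∈ Q, v i) * W v = 0 := by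
      intro Q hQcard
      interval_cases h : Q.card
      · rw [Finset.card_eq_zero] at h
        subst h
        simpa using hsumW
      · rw [Finset.card_eq_one] at h
        obtain ⟨i, rfl⟩ := h
        rw [← horth' i i le_rfl]
        apply Finset.sum_congr rfl
        intro v _
        rw [Finset.prod_singleton, zmod2_mul_self]
      · rw [Finset.card_eq_two] at h
        obtain ⟨i, j, hij, rfl⟩ := h
        rcases le_total i j with hle | hle
        · rw [← horth' i j hle]
          apply Finset.sum_congr rfl
          intro v _
          rw [Finset.prod_pair hij]
        · rw [← horth' j i hle]
          apply Finset.sum_congr rfl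
          intro v _
          rw [Finset.prod_pair hij, mul_comm (v i) (v j)]
    have hvanish : ∀ S : Finset (Fin k), k - 2 ≤ S.card →
        ∑ U ∈ S.powerset, W (ind U) = 0 := by
      intro S hScard
      have hprod : ∀ T : Finset (Fin k),
          (∏ i ∈ Sᶜ, (ind T i + 1)) = if T ⊆ S then 1 else 0 := by
        intro T
        by_cases h : T ⊆ S
        · rw [if_pos h]
          apply Finset.prod_eq_one
          intro i hi
          have : i ∉ T := fun hiT => (Finset.mem_compl.1 hi) (h hiT)
          simp [ind, this]
        · rw [if_neg h]
          obtain ⟨i, hiT, hiS⟩ := Finset.not_subset.1 h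
          apply Finset.prod_eq_zero (Finset.mem_compl.2 hiS)
          simp only [ind, hiT, if_true]
          decide
      have step1 : ∑ U ∈ S.powerset, W (ind U)
          = ∑ T : Finset (Fin k), (∏ i ∈ Sᶜ, (ind T i + 1)) * W (ind T) := by
        calc ∑ U ∈ S.powerset, W (ind U)
            = ∑ T : Finset (Fin k), if T ⊆ S then W (ind T) else 0 := by
              rw [show S.powerset = univ.filter (fun T => T ⊆ S) from by ext U; simp,
                Finset.sum_filter]
          _ = ∑ T : Finset (Fin k), (∏ i ∈ Sᶜ, (ind T i + 1)) * W (ind T) := by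
              apply Finset.sum_congr rfl
              intro T _
              rw [hprod T]
              split <;> simp
      rw [step1]
      have step2 : ∀ T : Finset (Fin k), (∏ i ∈ Sᶜ, (ind T i + 1))
          = ∑ Q ∈ Sᶜ.powerset, ∏ i ∈ Q, ind T i := by
        intro T
        rw [Finset.prod_add]
        apply Finset.sum_congr rfl
        intro Q _
        simp
      rw [Finset.sum_congr rfl (fun T _ => by rw [step2 T, Finset.sum_mul])]
      rw [Finset.sum_comm]
      apply Finset.sum_eq_zero
      intro Q hQmem
      have hQcard : Q.card ≤ 2 := by
        have h1 : Q.card ≤ Sᶜ.card := Finset.card_le_card (Finset.mem_powerset.1 hQmem)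
        have h2 : Sᶜ.card = k - S.card := by
          rw [Finset.card_compl]
          simp
        have h3 : S.card ≤ k := by
          have := Finset.card_le_card (Finset.subset_univ S)
          simpa using this
        omega
      rw [← hQ Q hQcard, sum_ind (fun v => (∏ i ∈ Q, v i) * W v)]
    -- construct the polynomial
    set a : Finset (Fin k) → ZMod 2 := fun S => ∑ U ∈ S.powerset, W (ind U) with ha
    set f : MvPolynomial (Fin k) (ZMod 2) :=
      ∑ S ∈ univ.filter (fun S : Finset (Fin k) => S.card ≤ k - 3),
        C (a S) * ∏ i ∈ S, X i with hf
    refine ⟨f, ?_, ?_⟩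
    · rw [hf]
      apply le_trans (totalDegree_finset_sum _ _)
      apply Finset.sup_le
      intro S hS
      rw [Finset.mem_filter] at hS
      calc (C (a S) * ∏ i ∈ S, X i).totalDegree
          ≤ (C (a S)).totalDegree + (∏ i ∈ S, X i).totalDegree := totalDegree_mul _ _
        _ ≤ 0 + ∑ i ∈ S, (X i : MvPolynomial (Fin k) (ZMod 2)).totalDegree := by
            gcongr
            · exact le_of_eq (totalDegree_C _)
            · exact totalDegree_finset_prod _ _
        _ = S.card := by simp [totalDegree_X]
        _ ≤ k - 3 := hS.2
    · intro v
      have hwv : w v = W v.1 := (hWne v.1 v.2).symm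
      set T := spt v.1 with hT
      have hvT : (v.1 : Fin k → ZMod 2) = ind T := (ind_spt v.1).symm
      rw [hwv, hvT, hf, map_sum]
      have heval : ∀ S ∈ univ.filter (fun S : Finset (Fin k) => S.card ≤ k - 3),
          eval (ind T) (C (a S) * ∏ i ∈ S, X i) = if S ⊆ T then a S else 0 := by
        intro S _
        rw [map_mul, eval_C, map_prod]
        simp only [eval_X]
        rw [prod_ind]
        split <;> simp
      rw [Finset.sum_congr rfl heval, ← Finset.sum_filter]
      have hsub : (univ.filter (fun S : Finset (Fin k) => S.card ≤ k - 3)).filter (· ⊆ T)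
          ⊆ T.powerset := by
        intro S hS
        rw [Finset.mem_filter] at hS
        exact Finset.mem_powerset.2 hS.2
      rw [Finset.sum_subset hsub ?_]
      · rw [← moebius (fun U => W (ind U)) T]
      · intro S hSmem hSnot
        have hST : S ⊆ T := Finset.mem_powerset.1 hSmem
        have hcard : ¬ S.card ≤ k - 3 := by
          intro hle
          exact hSnot (by simp [Finset.mem_filter, hle, hST])
        apply hvanish
        omega
  · rintro ⟨f, hdeg, hval⟩ i j hij
    have key : ∑ v : {v : Fin k → ZMod 2 // v ≠ 0}, v.1 i * v.1 j * w v
        = ∑ v : Fin k → ZMod 2, eval v (X i * X j * f) := by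
      rw [← sum_subtype_eq (fun v => eval v (X i * X j * f)) (by simp)]
      apply Finset.sum_congr rfl
      intro v _
      rw [hval v]
      simp [mul_assoc]
    rw [key]
    apply sum_eval_zero
    calc (X i * X j * f).totalDegree
        ≤ (X i * X j : MvPolynomial (Fin k) (ZMod 2)).totalDegree + f.totalDegree :=
          totalDegree_mul _ _
      _ ≤ ((X i : MvPolynomial (Fin k) (ZMod 2)).totalDegree
          + (X j : MvPolynomial (Fin k) (ZMod 2)).totalDegree) + f.totalDegree := by
          gcongr
          exact totalDegree_mul _ _
      _ ≤ 1 + 1 + (k - 3) := by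
          rw [totalDegree_X, totalDegree_X]
          omega
      _ < k := by omega
end

section
/- Let k ≥ 3 and let P_k ⊆ ((F_2^k \ {0}) → F_2) be the puncture at the coordinate 0 of the Reed–Muller code R(k−3,k), i.e., P_k = { w : (F_2^k \ {0}) → F_2 | ∃ f ∈ F_2[x_1,…,x_k] with total degree ≤ k−3 such that w(v) = f(v) for all nonzero v }. Then the covering radius of P_k equals k+1 if k is even and equals k if k is odd. -/
/-!
A word `w` on `𝔽₂ᵏ ∖ {0}` lies in the punctured code iff its syndrome `∑ᵥ w(v) v vᵀ` vanishes:
this is the duality `R(k-3, k)^⊥ = R(2, k)`, the constant term being absorbed by the free value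
at the deleted point. Hence the distance from `u` to the code is the least number of distinct
nonzero vectors whose Gram sum `∑ v vᵀ` is the symmetric matrix `syndrome u`.

Symplectic elimination writes a symmetric matrix as such a sum of at most `k` vectors, or of an
odd number at most `k + 1` when it is alternating; repeated vectors cancel in pairs. Conversely
the vectors of a Gram sum equal to an invertible matrix span `𝔽₂ᵏ`, so `1` needs `k` of them,
and for even `k` the alternating invertible matrix `1 + J` needs `k + 1`, because its vectors
add up to its diagonal, which is zero.
-/

open Matrix MvPolynomial

lemma ZMod.eq_one_of_ne_zero {a : ZMod 2} (ha : a ≠ 0) : a = 1 := by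
  revert a; decide

lemma ZMod.mul_self_eq_self (a : ZMod 2) : a * a = a := by
  revert a; decide

namespace PuncturedReedMuller

variable {ι : Type*}

section Decomposition

def gramSum (L : List (ι → ZMod 2)) : Matrix ι ι (ZMod 2) :=
  (L.map fun v => vecMulVec v v).sum

@[simp] lemma gramSum_nil : gramSum ([] : List (ι → ZMod 2)) = 0 := rfl

@[simp] lemma gramSum_cons (v : ι → ZMod 2) (L : List (ι → ZMod 2)) :
    gramSum (v :: L) = vecMulVec v v + gramSum L := by
  simp [gramSum]

lemma vecMulVec_add_add_add (c u w : ι → ZMod 2) :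
    vecMulVec (c + u) (c + u) + vecMulVec (c + w) (c + w) + vecMulVec (c + u + w) (c + u + w) =
      vecMulVec c c + vecMulVec u w + vecMulVec w u := by
  ext s t
  simp only [Matrix.add_apply, vecMulVec_apply, Pi.add_apply]
  ring_nf
  reduce_mod_char

def symplecticReduce (A : Matrix ι ι (ZMod 2)) (i j : ι) : Matrix ι ι (ZMod 2) :=
  A + vecMulVec (A i) (A j) + vecMulVec (A j) (A i)

section symplecticReduce

variable {A : Matrix ι ι (ZMod 2)} {i j : ι}

lemma symplecticReduce_apply (s t : ι) :
    symplecticReduce A i j s t = A s t + A i s * A j t + A j s * A i t := by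
  simp [symplecticReduce, vecMulVec_apply]

lemma symplecticReduce_isSymm (hA : A.IsSymm) : (symplecticReduce A i j).IsSymm := by
  refine IsSymm.ext fun s t => ?_
  simp only [symplecticReduce_apply, hA.apply t s]
  ring

lemma symplecticReduce_apply_self (s : ι) : symplecticReduce A i j s s = A s s := by
  rw [symplecticReduce_apply, mul_comm (A j s), add_assoc, ZModModule.add_self, add_zero]

lemma symplecticReduce_apply_eq_zero [DecidableEq ι] {T : Finset ι} (hA : A.IsSymm)
    (hdiag : ∀ s, A s s = 0) (hij : A i j = 1) (hT : ∀ s ∉ T, ∀ t, A s t = 0)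
    {s : ι} (hs : s ∉ (T.erase i).erase j) (t : ι) : symplecticReduce A i j s t = 0 := by
  have hji : A j i = 1 := hA.apply i j ▸ hij
  rw [symplecticReduce_apply]
  by_cases hsi : s = i
  · rw [hsi, hdiag, hji, zero_mul, one_mul, add_zero, ZModModule.add_self]
  by_cases hsj : s = j
  · rw [hsj, hdiag, hij, zero_mul, one_mul, add_zero, ZModModule.add_self]
  have hsT : s ∉ T := by simpa [hsi, hsj] using hs
  simp [hA.apply s i, hA.apply s j, hT s hsT]

end symplecticReduce

/-- The summand `c cᵀ` absorbs the third vector of each hyperbolic pair (see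
`vecMulVec_add_add_add`), so that `s` pairs cost `2 s + 1` vectors rather than `3 s`. -/
lemma exists_gramSum_eq_add_vecMulVec [DecidableEq ι] (T : Finset ι) (A : Matrix ι ι (ZMod 2))
    (hA : A.IsSymm) (hdiag : ∀ i, A i i = 0) (hT : ∀ i ∉ T, ∀ j, A i j = 0) (c : ι → ZMod 2) :
    ∃ L, gramSum L = A + vecMulVec c c ∧ Odd L.length ∧ L.length ≤ T.card + 1 := by
  induction T using Finset.strongInduction generalizing A c with
  | H T ih =>
  by_cases hA0 : A = 0
  · exact ⟨[c], by simp [hA0], by simp, by simp⟩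
  obtain ⟨i, j, hij⟩ : ∃ i j, A i j ≠ 0 := by
    by_contra! h
    exact hA0 (Matrix.ext h)
  replace hij := ZMod.eq_one_of_ne_zero hij
  have hiT : i ∈ T := by_contra fun h => one_ne_zero (hij ▸ hT i h j)
  have hjT : j ∈ T.erase i := by
    refine Finset.mem_erase.2 ⟨fun h => ?_, by_contra fun h => ?_⟩
    · subst h; exact one_ne_zero (hij.symm.trans (hdiag j))
    · exact one_ne_zero (hij ▸ hA.apply i j ▸ hT j h i)
  obtain ⟨L, hL, hodd, hlen⟩ :=
    ih _ ((Finset.erase_ssubset hjT).trans (Finset.erase_ssubset hiT))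
      (symplecticReduce A i j) (symplecticReduce_isSymm hA)
      (fun s => (symplecticReduce_apply_self s).trans (hdiag s))
      (fun s hs => symplecticReduce_apply_eq_zero hA hdiag hij hT hs) (c + A i + A j)
  refine ⟨(c + A i) :: (c + A j) :: L, ?_, by simpa [parity_simps] using hodd, ?_⟩
  · rw [gramSum_cons, gramSum_cons, hL, ← add_assoc, add_comm (symplecticReduce A i j),
      ← add_assoc, vecMulVec_add_add_add, symplecticReduce]
    ext s t
    simp only [Matrix.add_apply]
    ring_nf
    reduce_mod_char
  · have := Finset.card_erase_of_mem hjT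
    have := Finset.card_erase_of_mem hiT
    have := Finset.card_pos.2 ⟨j, hjT⟩
    simp only [List.length_cons]
    omega

lemma add_vecMulVec_row_apply_eq_zero [DecidableEq ι] {T : Finset ι} {A : Matrix ι ι (ZMod 2)}
    (hA : A.IsSymm) {i : ι} (hii : A i i = 1) (hT : ∀ s ∉ T, ∀ t, A s t = 0)
    {s : ι} (hs : s ∉ T.erase i) (t : ι) : (A + vecMulVec (A i) (A i)) s t = 0 := by
  rw [Matrix.add_apply, vecMulVec_apply]
  by_cases hsi : s = i
  · rw [hsi, hii, one_mul, ZModModule.add_self]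
  have hsT : s ∉ T := by simpa [hsi] using hs
  simp [hA.apply s i, hT s hsT]

lemma exists_gramSum_eq_of_apply_self_ne_zero [DecidableEq ι] (T : Finset ι)
    (A : Matrix ι ι (ZMod 2)) (hA : A.IsSymm) (hdiag : ∃ i, A i i ≠ 0)
    (hT : ∀ i ∉ T, ∀ j, A i j = 0) :
    ∃ L, gramSum L = A ∧ L.length ≤ T.card := by
  induction T using Finset.strongInduction generalizing A with
  | H T ih =>
  obtain ⟨i, hii⟩ := hdiag
  replace hii := ZMod.eq_one_of_ne_zero hii
  have hiT : i ∈ T := by_contra fun h => one_ne_zero (hii ▸ hT i h i)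
  have hcard := Finset.card_erase_of_mem hiT
  have hpos := Finset.card_pos.2 ⟨i, hiT⟩
  set A' := A + vecMulVec (A i) (A i)
  have hA' : A'.IsSymm := hA.add (IsSymm.ext fun _ _ => mul_comm _ _)
  have hT' : ∀ s ∉ T.erase i, ∀ t, A' s t = 0 := fun s hs =>
    add_vecMulVec_row_apply_eq_zero hA hii hT hs
  have hA'A : vecMulVec (A i) (A i) + A' = A := by
    rw [add_comm, add_assoc, ZModModule.add_self, add_zero]
  by_cases hdiag' : ∃ s, A' s s ≠ 0
  · obtain ⟨L, hL, hlen⟩ := ih _ (Finset.erase_ssubset hiT) A' hA' hdiag' hT'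
    exact ⟨A i :: L, by rw [gramSum_cons, hL, hA'A], by simp only [List.length_cons]; omega⟩
  · push Not at hdiag'
    obtain ⟨L, hL, -, hlen⟩ := exists_gramSum_eq_add_vecMulVec _ A' hA' hdiag' hT' (A i)
    exact ⟨L, by rw [hL, add_comm, hA'A], by omega⟩

lemma exists_gramSum_eq [Fintype ι] [DecidableEq ι] (A : Matrix ι ι (ZMod 2)) (hA : A.IsSymm) :
    ∃ L, gramSum L = A ∧
      L.length ≤ if Even (Fintype.card ι) then Fintype.card ι + 1 else Fintype.card ι := by
  have hT : ∀ i ∉ (Finset.univ : Finset ι), ∀ j, A i j = 0 := fun i hi =>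
    absurd (Finset.mem_univ i) hi
  by_cases hdiag : ∃ i, A i i ≠ 0
  · obtain ⟨L, hL, hlen⟩ := exists_gramSum_eq_of_apply_self_ne_zero _ A hA hdiag hT
    refine ⟨L, hL, ?_⟩
    split_ifs <;> simp only [Finset.card_univ] at hlen <;> omega
  · push Not at hdiag
    obtain ⟨L, hL, hodd, hlen⟩ := exists_gramSum_eq_add_vecMulVec _ A hA hdiag hT 0
    refine ⟨L, by simpa using hL, ?_⟩
    rw [Finset.card_univ] at hlen
    split_ifs with heven
    · exact hlen
    · rcases Nat.not_even_iff_odd.1 heven with ⟨m, hm⟩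
      rcases hodd with ⟨l, hl⟩
      omega

end Decomposition

lemma exists_prod_eq_mul [DecidableEq ι] {B : Finset ι} (hne : B.Nonempty) (hB : B.card ≤ 2) :
    ∃ i j, ∀ x : ι → ZMod 2, ∏ k ∈ B, x k = x i * x j := by
  obtain h | h : B.card = 1 ∨ B.card = 2 := by have := hne.card_pos; omega
  · obtain ⟨i, rfl⟩ := Finset.card_eq_one.1 h
    exact ⟨i, i, fun x => by rw [Finset.prod_singleton, ZMod.mul_self_eq_self]⟩
  · obtain ⟨i, j, hij, rfl⟩ := Finset.card_eq_two.1 h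
    exact ⟨i, j, fun x => Finset.prod_pair hij⟩

section Fintype

variable [Fintype ι]

lemma card_le_of_span_eq_top {K : Type*} [Field K] (S : Finset (ι → K))
    (hS : Submodule.span K (S : Set (ι → K)) = ⊤) : Fintype.card ι ≤ S.card := by
  have := finrank_le_of_span_eq_top (v := ((↑) : S → ι → K)) (by simpa using hS)
  rwa [Module.finrank_fintype_fun_eq_card, Fintype.card_coe] at this

lemma card_lt_of_span_eq_top_of_sum_eq_zero {K : Type*} [Field K] (S : Finset (ι → K))
    (hS : Submodule.span K (S : Set (ι → K)) = ⊤) (hne : S.Nonempty) (hsum : ∑ v ∈ S, v = 0) :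
    Fintype.card ι < S.card := by
  classical
  obtain ⟨v₀, hv₀⟩ := hne
  have hv₀_eq : v₀ = -∑ v ∈ S.erase v₀, v := by
    rwa [← Finset.add_sum_erase S (fun v => v) hv₀, add_eq_zero_iff_eq_neg] at hsum
  have hv₀_mem : v₀ ∈ Submodule.span K (S.erase v₀ : Set (ι → K)) := by
    have : -∑ v ∈ S.erase v₀, v ∈ Submodule.span K (S.erase v₀ : Set (ι → K)) :=
      Submodule.neg_mem _ (Submodule.sum_mem _ fun v hv => Submodule.subset_span hv)
    rwa [← hv₀_eq] at this
  have hspan : Submodule.span K (S.erase v₀ : Set (ι → K)) = ⊤ := by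
    refine eq_top_iff.2 (hS ▸ Submodule.span_le.2 fun v hv => ?_)
    by_cases h : v = v₀
    · exact h ▸ hv₀_mem
    · exact Submodule.subset_span (Finset.mem_erase.2 ⟨h, hv⟩)
  have := card_le_of_span_eq_top _ hspan
  rw [Finset.card_erase_of_mem hv₀] at this
  have := Finset.card_pos.2 ⟨v₀, hv₀⟩
  omega

lemma prod_add_one_add_eq_ite (x u : ι → ZMod 2) :
    ∏ i, (x i + (1 + u i)) = if u = x then 1 else 0 := by
  split_ifs with h
  · subst h
    exact Finset.prod_eq_one fun i _ => by generalize u i = a; revert a; decide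
  · obtain ⟨i, hi⟩ := Function.ne_iff.1 h
    refine Finset.prod_eq_zero (Finset.mem_univ i) ?_
    revert hi; generalize u i = a; generalize x i = b; revert a b; decide

variable [DecidableEq ι]

lemma hammingNorm_add_le {β : ι → Type*} [∀ i, AddZeroClass (β i)] [∀ i, DecidableEq (β i)]
    (x y : ∀ i, β i) : hammingNorm (x + y) ≤ hammingNorm x + hammingNorm y := by
  refine (Finset.card_le_card fun i hi => ?_).trans (Finset.card_union_le _ _)
  simp only [Finset.mem_union, Finset.mem_filter, Finset.mem_univ, true_and] at hi ⊢
  by_contra! h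
  exact hi (by simp [h.1, h.2])

lemma hammingNorm_single_le {β : ι → Type*} [∀ i, Zero (β i)] [∀ i, DecidableEq (β i)]
    (i : ι) (b : β i) : hammingNorm (Pi.single i b) ≤ 1 := by
  refine (Finset.card_le_card fun j hj => ?_).trans (Finset.card_singleton i).le
  by_contra h
  simp_all

lemma span_eq_top_of_isUnit_sum_vecMulVec {K : Type*} [Field K] (S : Finset (ι → K))
    (hS : IsUnit (∑ v ∈ S, vecMulVec v v)) : Submodule.span K (S : Set (ι → K)) = ⊤ := by
  refine Submodule.eq_top_iff'.2 fun y => ?_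
  obtain ⟨x, rfl⟩ := Matrix.mulVec_surjective_iff_isUnit.2 hS y
  rw [Matrix.sum_mulVec]
  refine Submodule.sum_mem _ fun v hv => ?_
  rw [vecMulVec_mulVec, op_smul_eq_smul]
  exact Submodule.smul_mem _ _ (Submodule.subset_span hv)

/-- The Möbius transform `∑_{supp x ⊆ A} W x`: the coefficient of `∏_{i ∈ A} X i` in the
algebraic normal form of `W`. -/
def anfCoeff (W : (ι → ZMod 2) → ZMod 2) (A : Finset ι) : ZMod 2 :=
  ∑ x, W x * ∏ i ∈ Aᶜ, (1 + x i)

noncomputable def anf (W : (ι → ZMod 2) → ZMod 2) : MvPolynomial ι (ZMod 2) :=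
  ∑ A : Finset ι, C (anfCoeff W A) * ∏ i ∈ A, X i

lemma eval_anf (W : (ι → ZMod 2) → ZMod 2) (x : ι → ZMod 2) : eval x (anf W) = W x := by
  simp only [anf, anfCoeff, map_sum, map_mul, eval_C, map_prod, eval_X, Finset.sum_mul]
  rw [Finset.sum_comm]
  simp_rw [mul_assoc, ← Finset.mul_sum]
  have hexpand : ∀ u : ι → ZMod 2,
      ∑ A : Finset ι, (∏ i ∈ Aᶜ, (1 + u i)) * ∏ i ∈ A, x i = ∏ i, (x i + (1 + u i)) := by
    intro u
    rw [Finset.prod_add, Finset.powerset_univ]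
    exact Finset.sum_congr rfl fun A _ => by rw [mul_comm, Finset.compl_eq_univ_sdiff]
  simp [hexpand, prod_add_one_add_eq_ite]

lemma totalDegree_anf_le (W : (ι → ZMod 2) → ZMod 2) (d : ℕ)
    (hW : ∀ A : Finset ι, d < A.card → anfCoeff W A = 0) : (anf W).totalDegree ≤ d := by
  refine totalDegree_finsetSum_le fun A _ => ?_
  by_cases hA : d < A.card
  · simp [hW A hA]
  refine (totalDegree_mul _ _).trans ?_
  rw [totalDegree_C, zero_add]
  refine (totalDegree_finsetProd _ _).trans ?_
  simp only [totalDegree_X, Finset.sum_const, smul_eq_mul, mul_one]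
  omega

lemma anfCoeff_eq_sum_moments (W : (ι → ZMod 2) → ZMod 2) (A : Finset ι) :
    anfCoeff W A = ∑ B ∈ Aᶜ.powerset, ∑ x, W x * ∏ i ∈ B, x i := by
  simp only [anfCoeff, Finset.prod_one_add, Finset.mul_sum]
  exact Finset.sum_comm

theorem exists_totalDegree_le_eval_eq (W : (ι → ZMod 2) → ZMod 2) (d : ℕ)
    (hW : ∀ B : Finset ι, d + B.card < Fintype.card ι → ∑ x, W x * ∏ i ∈ B, x i = 0) :
    ∃ f : MvPolynomial ι (ZMod 2), f.totalDegree ≤ d ∧ ∀ x, eval x f = W x := by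
  refine ⟨anf W, totalDegree_anf_le W d fun A hA => ?_, eval_anf W⟩
  rw [anfCoeff_eq_sum_moments]
  refine Finset.sum_eq_zero fun B hB => hW B ?_
  have := Finset.card_le_card (Finset.mem_powerset.1 hB)
  rw [Finset.card_compl] at this
  have := A.card_le_univ
  omega

variable (ι) in
abbrev PuncturedSpace := {v : ι → ZMod 2 // v ≠ 0}

def syndrome : (PuncturedSpace ι → ZMod 2) →ₗ[ZMod 2] Matrix ι ι (ZMod 2) :=
  Fintype.linearCombination (ZMod 2) fun v => vecMulVec v.1 v.1

lemma syndrome_apply (u : PuncturedSpace ι → ZMod 2) (i j : ι) :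
    syndrome u i j = ∑ v, u v * (v.1 i * v.1 j) := by
  simp [syndrome, Fintype.linearCombination_apply, Matrix.sum_apply, vecMulVec_apply]

lemma syndrome_isSymm (u : PuncturedSpace ι → ZMod 2) : (syndrome u).IsSymm :=
  IsSymm.ext fun i j => by simp only [syndrome_apply, mul_comm]

lemma exists_syndrome_eq_gramSum (L : List (ι → ZMod 2)) :
    ∃ e, syndrome e = gramSum L ∧ hammingNorm e ≤ L.length := by
  induction L with
  | nil => exact ⟨0, by simp, by simp⟩
  | cons v L ih =>
    obtain ⟨e, he, hlen⟩ := ih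
    by_cases hv : v = 0
    · exact ⟨e, by simp [he, hv], by simp only [List.length_cons]; omega⟩
    refine ⟨e + Pi.single ⟨v, hv⟩ 1, ?_, ?_⟩
    · rw [map_add, he, gramSum_cons, add_comm, syndrome,
        Fintype.linearCombination_apply_single, one_smul]
    · have := hammingNorm_add_le e (Pi.single ⟨v, hv⟩ (1 : ZMod 2))
      have := hammingNorm_single_le (β := fun _ => ZMod 2) (⟨v, hv⟩ : PuncturedSpace ι) 1
      simp only [List.length_cons]
      omega

def supportVectors (e : PuncturedSpace ι → ZMod 2) : Finset (ι → ZMod 2) :=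
  (Finset.univ.filter fun v => e v ≠ 0).map (Function.Embedding.subtype _)

lemma card_supportVectors (e : PuncturedSpace ι → ZMod 2) :
    (supportVectors e).card = hammingNorm e :=
  Finset.card_map _

lemma syndrome_eq_sum_supportVectors (e : PuncturedSpace ι → ZMod 2) :
    syndrome e = ∑ v ∈ supportVectors e, vecMulVec v v := by
  rw [supportVectors, Finset.sum_map, Finset.sum_filter, syndrome,
    Fintype.linearCombination_apply]
  refine Finset.sum_congr rfl fun v _ => ?_
  split_ifs with h
  · rw [ZMod.eq_one_of_ne_zero h, one_smul]
    rfl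
  · rw [not_not.1 h, zero_smul]

lemma card_le_hammingNorm_of_isUnit_syndrome (e : PuncturedSpace ι → ZMod 2)
    (he : IsUnit (syndrome e)) : Fintype.card ι ≤ hammingNorm e := by
  rw [syndrome_eq_sum_supportVectors] at he
  exact card_supportVectors e ▸
    card_le_of_span_eq_top _ (span_eq_top_of_isUnit_sum_vecMulVec _ he)

lemma card_lt_hammingNorm_of_isUnit_syndrome [Nonempty ι] (e : PuncturedSpace ι → ZMod 2)
    (he : IsUnit (syndrome e)) (hdiag : ∀ i, syndrome e i i = 0) :
    Fintype.card ι < hammingNorm e := by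
  rw [syndrome_eq_sum_supportVectors] at he hdiag
  have hne : (supportVectors e).Nonempty := by
    by_contra h
    rw [Finset.not_nonempty_iff_eq_empty.1 h, Finset.sum_empty] at he
    exact not_isUnit_zero he
  have hsum : ∑ v ∈ supportVectors e, v = 0 := by
    ext i
    simpa [Matrix.sum_apply, vecMulVec_apply, ZMod.mul_self_eq_self] using hdiag i
  exact card_supportVectors e ▸
    card_lt_of_span_eq_top_of_sum_eq_zero _ (span_eq_top_of_isUnit_sum_vecMulVec _ he) hne hsum

def puncturedReedMuller (r : ℕ) : Set (PuncturedSpace ι → ZMod 2) :=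
  {w | ∃ f : MvPolynomial ι (ZMod 2), f.totalDegree ≤ r ∧ ∀ v, w v = eval v.1 f}

lemma syndrome_eq_zero_of_mem {r : ℕ} (hr : r + 2 < Fintype.card ι)
    {w : PuncturedSpace ι → ZMod 2} (hw : w ∈ puncturedReedMuller r) : syndrome w = 0 := by
  obtain ⟨f, hf, hwf⟩ := hw
  ext i j
  have hdeg : (f * X i * X j).totalDegree < (Fintype.card (ZMod 2) - 1) * Fintype.card ι := by
    refine lt_of_le_of_lt
      ((totalDegree_mul _ _).trans (add_le_add (totalDegree_mul _ _) le_rfl)) ?_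
    simp only [totalDegree_X, ZMod.card]
    omega
  have hsum := sum_eval_eq_zero _ hdeg
  rw [Fintype.sum_eq_add_sum_subtype_ne _ 0] at hsum
  simpa [syndrome_apply, hwf, mul_assoc] using hsum

lemma mem_of_syndrome_eq_zero {r : ℕ} (hr : Fintype.card ι ≤ r + 3)
    {w : PuncturedSpace ι → ZMod 2} (hw : syndrome w = 0) : w ∈ puncturedReedMuller r := by
  -- the value at `0` is chosen so that `W` sums to zero
  let W : (ι → ZMod 2) → ZMod 2 := fun x => if h : x = 0 then ∑ v, w v else w ⟨x, h⟩
  have hWw : ∀ v : PuncturedSpace ι, W v.1 = w v := fun v => dif_neg v.2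
  obtain ⟨f, hf, hfW⟩ := exists_totalDegree_le_eval_eq W r fun B hB => by
    rw [Fintype.sum_eq_add_sum_subtype_ne _ 0]
    simp only [hWw]
    rcases B.eq_empty_or_nonempty with rfl | hne
    · simp [W, ZModModule.add_self]
    obtain ⟨i, j, hij⟩ := exists_prod_eq_mul hne (by omega)
    simp only [hij, Pi.zero_apply, mul_zero, zero_add]
    exact (syndrome_apply w i j).symm.trans (by rw [hw, Matrix.zero_apply])
  exact ⟨f, hf, fun v => by rw [hfW, hWw]⟩

lemma mem_puncturedReedMuller_iff {r : ℕ} (hr : r + 3 = Fintype.card ι)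
    (w : PuncturedSpace ι → ZMod 2) : w ∈ puncturedReedMuller r ↔ syndrome w = 0 :=
  ⟨syndrome_eq_zero_of_mem (by omega), mem_of_syndrome_eq_zero hr.ge⟩

noncomputable def distToCode (C : Set (PuncturedSpace ι → ZMod 2))
    (u : PuncturedSpace ι → ZMod 2) : ℕ :=
  sInf {d | ∃ w ∈ C, d = hammingDist u w}

noncomputable def syndromeWeight (A : Matrix ι ι (ZMod 2)) : ℕ :=
  sInf {d | ∃ e, syndrome e = A ∧ d = hammingNorm e}

lemma distToCode_puncturedReedMuller {r : ℕ} (hr : r + 3 = Fintype.card ι)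
    (u : PuncturedSpace ι → ZMod 2) :
    distToCode (puncturedReedMuller r) u = syndromeWeight (syndrome u) := by
  unfold distToCode syndromeWeight
  congr 1
  ext d
  simp only [Set.mem_ofPred_eq, mem_puncturedReedMuller_iff hr, hammingDist_eq_hammingNorm]
  constructor
  · rintro ⟨w, hw, rfl⟩
    refine ⟨-u + w, ?_, rfl⟩
    rw [map_add, map_neg, hw, add_zero, ZModModule.neg_eq_self]
  · rintro ⟨e, he, rfl⟩
    refine ⟨u + e, ?_, by rw [neg_add_cancel_left]⟩
    rw [map_add, he, ZModModule.add_self]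

lemma syndromeWeight_le {A : Matrix ι ι (ZMod 2)} (hA : A.IsSymm) :
    syndromeWeight A ≤ if Even (Fintype.card ι) then Fintype.card ι + 1 else Fintype.card ι := by
  obtain ⟨L, hL, hlen⟩ := exists_gramSum_eq A hA
  obtain ⟨e, he, hnorm⟩ := exists_syndrome_eq_gramSum L
  have hmem : hammingNorm e ∈ {d | ∃ e, syndrome e = A ∧ d = hammingNorm e} :=
    ⟨e, he.trans hL, rfl⟩
  exact (Nat.sInf_le hmem).trans (hnorm.trans hlen)

lemma le_syndromeWeight_syndrome {n : ℕ} (u : PuncturedSpace ι → ZMod 2)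
    (h : ∀ e, syndrome e = syndrome u → n ≤ hammingNorm e) : n ≤ syndromeWeight (syndrome u) :=
  le_csInf ⟨_, u, rfl, rfl⟩ fun _ ⟨e, he, hd⟩ => hd ▸ h e he

lemma exists_syndrome_eq {A : Matrix ι ι (ZMod 2)} (hA : A.IsSymm) : ∃ u, syndrome u = A := by
  obtain ⟨L, hL, -⟩ := exists_gramSum_eq A hA
  obtain ⟨u, hu, -⟩ := exists_syndrome_eq_gramSum L
  exact ⟨u, hu.trans hL⟩

lemma isUnit_one_add_vecMulVec_one (h : Even (Fintype.card ι)) :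
    IsUnit (1 + vecMulVec 1 1 : Matrix ι ι (ZMod 2)) := by
  refine IsUnit.of_mul_eq_one (1 + vecMulVec 1 1) ?_
  have hJ : (vecMulVec 1 1 : Matrix ι ι (ZMod 2)) * vecMulVec 1 1 = 0 := by
    rw [vecMulVec_mul_vecMulVec, one_dotProduct_one, (ZMod.natCast_eq_zero_iff_even).2 h,
      zero_smul, vecMulVec_zero]
  simp only [add_mul, mul_add, one_mul, mul_one, hJ, add_zero]
  rw [add_assoc, ZModModule.add_self, add_zero]

lemma exists_le_syndromeWeight [Nonempty ι] :
    ∃ u : PuncturedSpace ι → ZMod 2,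
      (if Even (Fintype.card ι) then Fintype.card ι + 1 else Fintype.card ι) ≤
        syndromeWeight (syndrome u) := by
  split_ifs with h
  · have hA : (1 + vecMulVec 1 1 : Matrix ι ι (ZMod 2)).IsSymm :=
      IsSymm.ext fun i j => by simp [one_apply, eq_comm]
    obtain ⟨u, hu⟩ := exists_syndrome_eq hA
    refine ⟨u, le_syndromeWeight_syndrome u fun e he => ?_⟩
    rw [hu] at he
    refine card_lt_hammingNorm_of_isUnit_syndrome e
      (he ▸ isUnit_one_add_vecMulVec_one h) fun i => ?_
    rw [he, Matrix.add_apply, one_apply_eq, vecMulVec_apply, Pi.one_apply, mul_one,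
      ZModModule.add_self]
  · obtain ⟨u, hu⟩ := exists_syndrome_eq (isSymm_one (n := ι) (α := ZMod 2))
    exact ⟨u, le_syndromeWeight_syndrome u fun e he =>
      card_le_hammingNorm_of_isUnit_syndrome e (he.trans hu ▸ isUnit_one)⟩

theorem sSup_distToCode_puncturedReedMuller [Nonempty ι] {r : ℕ} (hr : r + 3 = Fintype.card ι) :
    sSup {n | ∃ u : PuncturedSpace ι → ZMod 2, n = distToCode (puncturedReedMuller r) u} =
      if Even (Fintype.card ι) then Fintype.card ι + 1 else Fintype.card ι := by
  simp only [distToCode_puncturedReedMuller hr]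
  obtain ⟨u, hu⟩ := exists_le_syndromeWeight (ι := ι)
  have hle (u : PuncturedSpace ι → ZMod 2) := syndromeWeight_le (syndrome_isSymm u)
  exact IsGreatest.csSup_eq ⟨⟨u, le_antisymm hu (hle u)⟩, by rintro _ ⟨u, rfl⟩; exact hle u⟩

end Fintype

end PuncturedReedMuller

/-- The covering radius of the puncture at 0 of the Reed–Muller code
R(k−3, k) equals k+1 if k is even and k if k is odd. -/
theorem stmt_7 (k : ℕ) (hk : 3 ≤ k) :
    sSup {r : ℕ | ∃ u : {v : Fin k → ZMod 2 // v ≠ 0} → ZMod 2,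
        r = sInf {d : ℕ | ∃ w ∈ {w : {v : Fin k → ZMod 2 // v ≠ 0} → ZMod 2 |
              ∃ f : MvPolynomial (Fin k) (ZMod 2), f.totalDegree ≤ k - 3 ∧
                ∀ v : {v : Fin k → ZMod 2 // v ≠ 0}, w v = MvPolynomial.eval v.1 f},
            d = hammingDist u w}} =
      if Even k then k + 1 else k := by
  have : Nonempty (Fin k) := ⟨⟨0, by omega⟩⟩
  have h := PuncturedReedMuller.sSup_distToCode_puncturedReedMuller (ι := Fin k) (r := k - 3)
    (by rw [Fintype.card_fin]; omega)
  rw [Fintype.card_fin] at h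
  exact h
end

section
/- For every k ≥ 1, the rank over F_2 of the self-orthogonality matrix SO_k equals k(k+1)/2; equivalently, the k(k+1)/2 functions v ↦ v_i v_j on F_2^k \ {0}, indexed by pairs 1 ≤ i ≤ j ≤ k, are linearly independent over F_2. -/
/-!
Evaluating a vanishing combination `∑ g (i,j) v_i v_j` at the unit vector `e_i` isolates the
diagonal coefficient `g (i,i)`; its value at `e_i + e_j` for `i < j` is then
`g (i,i) + g (j,j) + g (i,j) = g (i,j)`. The rank statement follows since there are
`k(k+1)/2` unordered pairs, i.e. elements of `Sym2 (Fin k)`.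
-/

section QuadraticMonomials

variable (ι R : Type*) [LinearOrder ι] [CommRing R]

def quadraticMonomial : {p : ι × ι // p.1 ≤ p.2} → {v : ι → R // v ≠ 0} → R :=
  fun p v => v.1 p.1.1 * v.1 p.1.2

variable {ι R}

theorem card_subtype_fst_le_snd [Fintype ι] :
    Fintype.card {p : ι × ι // p.1 ≤ p.2} = Fintype.card ι * (Fintype.card ι + 1) / 2 := by
  rw [← Fintype.card_congr Sym2.sortEquiv, Sym2.card, Nat.choose_two_right, Nat.add_sub_cancel,
    Nat.mul_comm]

theorem sum_mul_single_mul_single [Fintype ι] (g : {p : ι × ι // p.1 ≤ p.2} → R) (a b : ι) :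
    ∑ p, g p * ((Pi.single a 1 : ι → R) p.1.1 * (Pi.single b 1 : ι → R) p.1.2) =
      if h : a ≤ b then g ⟨(a, b), h⟩ else 0 := by
  have hterm : ∀ p : {p : ι × ι // p.1 ≤ p.2},
      g p * ((Pi.single a 1 : ι → R) p.1.1 * (Pi.single b 1 : ι → R) p.1.2) =
        if p.1 = (a, b) then g p else 0 := by
    rintro ⟨⟨c, d⟩, _⟩
    by_cases hc : c = a <;> by_cases hd : d = b <;> simp [hc, hd]
  simp only [hterm]
  split_ifs with h
  · rw [Fintype.sum_eq_single ⟨(a, b), h⟩ fun p hp => if_neg fun he => hp (Subtype.ext he),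
      if_pos rfl]
  · exact Fintype.sum_eq_zero _ fun p =>
      if_neg fun (he : p.1 = (a, b)) => h (by simpa [he] using p.2)

theorem linearIndependent_quadraticMonomial [Fintype ι] [Nontrivial R] :
    LinearIndependent R (quadraticMonomial ι R) := by
  rw [Fintype.linearIndependent_iff]
  intro g hg
  have heval : ∀ v : ι → R, v ≠ 0 → ∑ p, g p * (v p.1.1 * v p.1.2) = 0 := fun v hv => by
    simpa [quadraticMonomial, Finset.sum_apply] using congrFun hg ⟨v, hv⟩
  have hdiag : ∀ i, g ⟨(i, i), le_rfl⟩ = 0 := fun i => by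
    simpa [sum_mul_single_mul_single] using heval (Pi.single i 1) (by simp)
  rintro ⟨⟨i, j⟩, hij : i ≤ j⟩
  obtain rfl | hlt := eq_or_lt_of_le hij
  · exact hdiag i
  have hv : (Pi.single i 1 + Pi.single j 1 : ι → R) ≠ 0 := fun h => by
    simpa [hlt.ne] using congrFun h i
  simpa [mul_add, add_mul, Finset.sum_add_distrib, sum_mul_single_mul_single, hij, hlt.not_ge,
    hdiag] using heval _ hv

theorem rank_quadraticMonomial [Fintype ι] {K : Type*} [Field K] [Fintype K] [DecidableEq K] :
    (Matrix.of (quadraticMonomial ι K)).rank = Fintype.card ι * (Fintype.card ι + 1) / 2 := by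
  rw [← card_subtype_fst_le_snd]
  exact LinearIndependent.rank_matrix (M := Matrix.of (quadraticMonomial ι K))
    linearIndependent_quadraticMonomial

end QuadraticMonomials

theorem stmt_8_general (k : ℕ) :
    (Matrix.of (fun (p : {p : Fin k × Fin k // p.1 ≤ p.2})
        (v : {v : Fin k → ZMod 2 // v ≠ 0}) => v.1 p.1.1 * v.1 p.1.2)).rank
      = k * (k + 1) / 2 ∧
    LinearIndependent (ZMod 2)
      (fun (p : {p : Fin k × Fin k // p.1 ≤ p.2}) =>
        fun v : {v : Fin k → ZMod 2 // v ≠ 0} => v.1 p.1.1 * v.1 p.1.2) := by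
  exact ⟨rank_quadraticMonomial.trans (by rw [Fintype.card_fin]),
    linearIndependent_quadraticMonomial⟩

/-- The rank of the self-orthogonality matrix SO_k is k(k+1)/2; equivalently,
the functions v ↦ v i * v j on F_2^k \ {0}, indexed by pairs i ≤ j, are
linearly independent over F_2. -/
theorem stmt_8 (k : ℕ) (hk : 1 ≤ k) :
    (Matrix.of (fun (p : {p : Fin k × Fin k // p.1 ≤ p.2})
        (v : {v : Fin k → ZMod 2 // v ≠ 0}) => v.1 p.1.1 * v.1 p.1.2)).rank
      = k * (k + 1) / 2 ∧
    LinearIndependent (ZMod 2)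
      (fun (p : {p : Fin k × Fin k // p.1 ≤ p.2}) =>
        fun v : {v : Fin k → ZMod 2 // v ≠ 0} => v.1 p.1.1 * v.1 p.1.2) :=
  stmt_8_general k
end

section
/- Let k ≥ 2 and let G be any k×n matrix over F_2. Then there exist a natural number m with m ≤ k+1 if k is even and m ≤ k if k is odd, and column vectors c_1, …, c_m ∈ F_2^k, such that the augmented k×(n+m) matrix G' = [G | c_1 ⋯ c_m] satisfies G' · G'ᵀ = 0 over F_2; that is, the rows of G' are pairwise orthogonal and self-orthogonal, so the row space of G' is a self-orthogonal binary code extending the code generated by G (a shortest self-orthogonal embedding requires adding at most k+1 columns when k is even and at most k columns when k is odd). -/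
/-!
Since `G' G'ᵀ = G Gᵀ + C Cᵀ` and `M + M = 0` over `F₂`, it suffices to write the symmetric matrix
`A = G Gᵀ` as a sum `∑ cᵢ cᵢᵀ` of few squares. Eliminating a row `v = A i` with `A i i = 1`
(subtract `vvᵀ`), or, if the diagonal vanishes, two rows `x = A i`, `y = A j` with `A i j = 1`
(subtract `xyᵀ + yxᵀ`), writes `A` as `p` squares plus `s` hyperbolic pairs with `p + 2s ≤ k`.
In characteristic two `xyᵀ + yxᵀ + ddᵀ` is the sum of the squares of `x + d`, `y + d`, `x + y + d`,
so a single square `ddᵀ` (with `d = 0` if `p = 0`) absorbs the pairs one by one at two columns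
each. This uses `2s + max p 1` columns: at most `k`, or `k + 1` when `p = 0` and `k` is even.
-/

open Matrix

section Squares

variable {n R : Type*} [CommRing R]

def sumSq (l : List (n → R)) : Matrix n n R := (l.map fun v => vecMulVec v v).sum

def sumHyp (l : List ((n → R) × (n → R))) : Matrix n n R :=
  (l.map fun p => vecMulVec p.1 p.2 + vecMulVec p.2 p.1).sum

@[simp] lemma sumSq_nil : sumSq ([] : List (n → R)) = 0 := rfl

@[simp] lemma sumSq_cons (v : n → R) (l : List (n → R)) :
    sumSq (v :: l) = vecMulVec v v + sumSq l := List.sum_cons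

@[simp] lemma sumSq_append (l l' : List (n → R)) : sumSq (l ++ l') = sumSq l + sumSq l' := by
  simp [sumSq]

@[simp] lemma sumHyp_cons (p : (n → R) × (n → R)) (l : List ((n → R) × (n → R))) :
    sumHyp (p :: l) = vecMulVec p.1 p.2 + vecMulVec p.2 p.1 + sumHyp l := List.sum_cons

lemma sumSq_eq_mul_transpose (cs : List (n → R)) :
    sumSq cs = (of fun i (t : Fin cs.length) => cs[t] i) *
      (of fun i (t : Fin cs.length) => cs[t] i)ᵀ := by
  ext i j
  simp [sumSq, mul_apply, vecMulVec_apply, ← Fin.sum_univ_fun_getElem, Matrix.sum_apply]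

lemma of_append_mul_transpose {ι : Type*} {a b : ℕ} (G : Matrix ι (Fin a) R)
    (C : Matrix ι (Fin b) R) :
    (of fun i => Fin.append (G i) (C i)) * (of fun i => Fin.append (G i) (C i))ᵀ =
      G * Gᵀ + C * Cᵀ := by
  ext i j
  simp [mul_apply, Fin.sum_univ_add]

variable [CharP R 2]

lemma vecMulVec_add_vecMulVec_add_vecMulVec_self (x y d : n → R) :
    vecMulVec x y + vecMulVec y x + vecMulVec d d =
      vecMulVec (x + d) (x + d) + vecMulVec (y + d) (y + d) +
        vecMulVec (x + y + d) (x + y + d) := by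
  ext i j
  simp only [Matrix.add_apply, vecMulVec_apply, Pi.add_apply]
  linear_combination -(x i * x j + y i * y j + d i * d j + x i * d j + d i * x j + y i * d j +
    d i * y j) * CharTwo.two_eq_zero (R := R)

lemma exists_sumSq_eq_sumHyp_add_vecMulVec_self (ps : List ((n → R) × (n → R))) (d : n → R) :
    ∃ cs : List (n → R), cs.length = 2 * ps.length + 1 ∧
      sumSq cs = sumHyp ps + vecMulVec d d := by
  induction ps generalizing d with
  | nil => exact ⟨[d], rfl, by simp [sumHyp]⟩
  | cons p ps ih =>
    obtain ⟨x, y⟩ := p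
    obtain ⟨cs, hlen, hcs⟩ := ih (x + y + d)
    refine ⟨(x + d) :: (y + d) :: cs, by simp [hlen]; ring, ?_⟩
    simp only [sumSq_cons, sumHyp_cons, hcs]
    rw [add_right_comm _ (sumHyp ps), vecMulVec_add_vecMulVec_add_vecMulVec_self]
    abel

end Squares

namespace Matrix.IsSymm

variable {n R : Type*} [DecidableEq n] [CommRing R] {A : Matrix n n R} {S : Finset n}

lemma sub_vecMulVec_self_row_eq_zero (hA : A.IsSymm) (hS : ∀ u ∉ S, A u = 0) {i : n}
    (hi : A i i = 1) : ∀ u ∉ S.erase i, (A - vecMulVec (A i) (A i)) u = 0 := by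
  intro u hu
  funext t
  rcases eq_or_ne u i with rfl | hui
  · simp [vecMulVec_apply, hi]
  · have hAu : A u = 0 := hS u fun h => hu (Finset.mem_erase.2 ⟨hui, h⟩)
    simp [vecMulVec_apply, hAu, (hA.apply u i).trans (congrFun hAu i)]

lemma sub_hyperbolic_row_eq_zero (hA : A.IsSymm) (hS : ∀ u ∉ S, A u = 0) {i j : n}
    (hii : A i i = 0) (hjj : A j j = 0) (hij : A i j = 1) :
    ∀ u ∉ (S.erase i).erase j,
      (A - (vecMulVec (A i) (A j) + vecMulVec (A j) (A i))) u = 0 := by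
  intro u hu
  funext t
  by_cases hui : u = i
  · subst hui; simp [vecMulVec_apply, hii, (hA.apply u j).trans hij]
  by_cases huj : u = j
  · subst huj; simp [vecMulVec_apply, hjj, hij]
  have hAu : A u = 0 := hS u fun h => hu (by simp [hui, huj, h])
  simp [vecMulVec_apply, hAu, (hA.apply u i).trans (congrFun hAu i),
    (hA.apply u j).trans (congrFun hAu j)]

theorem exists_sumSq_add_sumHyp {A : Matrix n n (ZMod 2)} (hA : A.IsSymm) (S : Finset n)
    (hS : ∀ u ∉ S, A u = 0) :
    ∃ ds ps, ds.length + 2 * ps.length ≤ S.card ∧ A = sumSq ds + sumHyp ps := by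
  induction S using Finset.strongInduction generalizing A with
  | H S ih =>
  have mem_of_ne_zero {i j : n} (h : A i j ≠ 0) : i ∈ S := by
    by_contra hi; exact h (congrFun (hS i hi) j)
  by_cases hdiag : ∃ i, A i i ≠ 0
  · obtain ⟨i, hi⟩ := hdiag
    have hiS := mem_of_ne_zero hi
    obtain ⟨ds, ps, hlen, hdec⟩ := ih _ (Finset.erase_ssubset hiS) (hA.sub (by simp [IsSymm]))
      (hA.sub_vecMulVec_self_row_eq_zero hS (Fin.eq_one_of_ne_zero _ hi))
    refine ⟨A i :: ds, ps, ?_, by rw [sumSq_cons, add_assoc, ← hdec, add_sub_cancel]⟩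
    have := Finset.card_erase_add_one hiS
    simp only [List.length_cons]
    omega
  push Not at hdiag
  by_cases hzero : A = 0
  · exact ⟨[], [], by simp, by simp [hzero, sumHyp]⟩
  obtain ⟨i, j, hij⟩ : ∃ i j, A i j ≠ 0 := by
    by_contra! h; exact hzero (Matrix.ext h)
  have hne : i ≠ j := by rintro rfl; exact hij (hdiag i)
  have hiS := mem_of_ne_zero hij
  have hjS : j ∈ S.erase i :=
    Finset.mem_erase.2 ⟨hne.symm, mem_of_ne_zero ((hA.apply j i).symm ▸ hij)⟩
  obtain ⟨ds, ps, hlen, hdec⟩ :=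
    ih _ ((Finset.erase_ssubset hjS).trans_subset (Finset.erase_subset i S))
      (hA.sub (by simp [IsSymm, add_comm]))
      (hA.sub_hyperbolic_row_eq_zero hS (hdiag i) (hdiag j) (Fin.eq_one_of_ne_zero _ hij))
  refine ⟨ds, (A i, A j) :: ps, ?_, by rw [sumHyp_cons, add_left_comm, ← hdec, add_sub_cancel]⟩
  have := Finset.card_erase_add_one hiS
  have := Finset.card_erase_add_one hjS
  simp only [List.length_cons]
  omega

theorem exists_sumSq_eq [Fintype n] {A : Matrix n n (ZMod 2)} (hA : A.IsSymm) :
    ∃ cs, (if Even (Fintype.card n) then cs.length ≤ Fintype.card n + 1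
      else cs.length ≤ Fintype.card n) ∧ sumSq cs = A := by
  obtain ⟨ds, ps, hlen, rfl⟩ := hA.exists_sumSq_add_sumHyp Finset.univ (by simp)
  rw [Finset.card_univ] at hlen
  cases ds with
  | nil =>
    obtain ⟨cs, hcs, hsum⟩ := exists_sumSq_eq_sumHyp_add_vecMulVec_self ps 0
    refine ⟨cs, ?_, by simp [hsum]⟩
    simp only [List.length_nil] at hlen
    split_ifs with h
    · omega
    · obtain ⟨j, hj⟩ := Nat.not_even_iff_odd.1 h
      omega
  | cons d ds =>
    obtain ⟨cs, hcs, hsum⟩ := exists_sumSq_eq_sumHyp_add_vecMulVec_self ps d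
    refine ⟨cs ++ ds, ?_, by rw [sumSq_append, hsum, sumSq_cons]; abel⟩
    simp only [List.length_append, List.length_cons] at hlen ⊢
    split_ifs <;> omega

end Matrix.IsSymm

theorem stmt_9_general (k n : ℕ) (G : Matrix (Fin k) (Fin n) (ZMod 2)) :
    ∃ (m : ℕ) (c : Fin m → Fin k → ZMod 2) (Gext : Matrix (Fin k) (Fin (n + m)) (ZMod 2)),
      (if Even k then m ≤ k + 1 else m ≤ k) ∧
      (∀ i : Fin k, Gext i = Fin.append (G i) fun t : Fin m => c t i) ∧
      Gext * Gext.transpose = 0 := by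
  have hsymm : (G * Gᵀ).IsSymm := by simp [IsSymm, transpose_mul]
  obtain ⟨cs, hlen, hcs⟩ := hsymm.exists_sumSq_eq
  refine ⟨cs.length, fun t => cs[t], of fun i => Fin.append (G i) fun t => cs[t] i,
    by simpa using hlen, fun _ => rfl, ?_⟩
  calc _ = G * Gᵀ + sumSq cs := by rw [sumSq_eq_mul_transpose]; exact of_append_mul_transpose _ _
    _ = 0 := by rw [hcs]; ext; exact CharTwo.add_self_eq_zero _

/-- For k ≥ 2, any k×n matrix G over F_2 can be extended by adding at most
k+1 columns (k even) resp. at most k columns (k odd) to a matrix Gext with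
Gext · Gextᵀ = 0, so that the row space of Gext is a self-orthogonal code
extending the code generated by G. -/
theorem stmt_9 (k n : ℕ) (hk : 2 ≤ k) (G : Matrix (Fin k) (Fin n) (ZMod 2)) :
    ∃ (m : ℕ) (c : Fin m → Fin k → ZMod 2) (Gext : Matrix (Fin k) (Fin (n + m)) (ZMod 2)),
      (if Even k then m ≤ k + 1 else m ≤ k) ∧
      (∀ i : Fin k, Gext i = Fin.append (G i) fun t : Fin m => c t i) ∧
      Gext * Gext.transpose = 0 :=
  stmt_9_general k n G
end

section
/- Let C be a nonempty binary code of length n ≥ 2 (a set of vectors in F_2^n, not necessarily linear) in which every codeword has even Hamming weight, and suppose C has covering radius ρ ≥ 1. Then for any fixed coordinate position, the punctured code obtained by deleting that coordinate from every codeword of C has covering radius exactly ρ − 1. -/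
/-!
Puncturing changes every distance by at most one, so the covering radius drops by at most one.
For the reverse bound, extend a punctured word `x'` by the bit that makes the weight of the
extension `x` have parity opposite to `ρ`. Since all codewords have even weight, every distance
from `x` to the code has the parity of the weight of `x`, so the nearest codeword is at distance
at most `ρ - 1` from `x`, and hence its puncture is at most that far from `x'`.
-/

open Finset

section Code

variable {ι β : Type*}

noncomputable def codeDist [Fintype ι] [DecidableEq β] (C : Set (ι → β))
    (x : ι → β) : ℕ :=
  sInf {d : ℕ | ∃ c ∈ C, d = hammingDist x c}

noncomputable def coveringRadius [Fintype ι] [DecidableEq β] (C : Set (ι → β)) : ℕ :=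
  sSup {r : ℕ | ∃ x : ι → β, r = codeDist C x}

def puncture (C : Set (ι → β)) (i : ι) : Set ({j : ι // j ≠ i} → β) :=
  {w | ∃ c ∈ C, ∀ j : {j : ι // j ≠ i}, w j = c j.1}

theorem puncture_nonempty {C : Set (ι → β)} (hC : C.Nonempty) (i : ι) :
    (puncture C i).Nonempty := by
  obtain ⟨c, hc⟩ := hC
  exact ⟨fun j => c j, c, hc, fun _ => rfl⟩

variable [Fintype ι] [DecidableEq β] {C : Set (ι → β)}

theorem codeDist_le {x c : ι → β} (hc : c ∈ C) : codeDist C x ≤ hammingDist x c :=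
  Nat.sInf_le ⟨c, hc, rfl⟩

theorem exists_hammingDist_eq_codeDist (hC : C.Nonempty) (x : ι → β) :
    ∃ c ∈ C, hammingDist x c = codeDist C x := by
  obtain ⟨c₀, hc₀⟩ := hC
  obtain ⟨c, hc, h⟩ := Nat.sInf_mem (s := {d : ℕ | ∃ c ∈ C, d = hammingDist x c})
    ⟨_, c₀, hc₀, rfl⟩
  exact ⟨c, hc, h.symm⟩

theorem bddAbove_codeDist (hC : C.Nonempty) :
    BddAbove {r : ℕ | ∃ x : ι → β, r = codeDist C x} := by
  obtain ⟨c, hc⟩ := hC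
  refine ⟨Fintype.card ι, ?_⟩
  rintro _ ⟨x, rfl⟩
  exact (codeDist_le hc).trans hammingDist_le_card_fintype

theorem codeDist_le_coveringRadius (hC : C.Nonempty) (x : ι → β) :
    codeDist C x ≤ coveringRadius C :=
  le_csSup (bddAbove_codeDist hC) ⟨x, rfl⟩

theorem exists_codeDist_eq_coveringRadius [Nonempty β] (hC : C.Nonempty) :
    ∃ x : ι → β, codeDist C x = coveringRadius C := by
  obtain ⟨x, hx⟩ := Nat.sSup_mem (s := {r : ℕ | ∃ x : ι → β, r = codeDist C x})
    ⟨_, Classical.arbitrary (ι → β), rfl⟩ (bddAbove_codeDist hC)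
  exact ⟨x, hx.symm⟩

variable [DecidableEq ι]

theorem hammingDist_eq_ite_add_hammingDist_restrict (i : ι) (x y : ι → β) :
    hammingDist x y = (if x i ≠ y i then 1 else 0)
      + hammingDist (fun j : {j : ι // j ≠ i} => x j) (fun j => y j) := by
  simp only [hammingDist, card_filter]
  exact Fintype.sum_eq_add_sum_subtype_ne _ i

theorem hammingDist_restrict_le (i : ι) (x y : ι → β) :
    hammingDist (fun j : {j : ι // j ≠ i} => x j) (fun j => y j) ≤ hammingDist x y := by
  rw [hammingDist_eq_ite_add_hammingDist_restrict i x y]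
  exact Nat.le_add_left _ _

theorem hammingDist_le_hammingDist_restrict_add_one (i : ι) (x y : ι → β) :
    hammingDist x y ≤ hammingDist (fun j : {j : ι // j ≠ i} => x j) (fun j => y j) + 1 := by
  rw [hammingDist_eq_ite_add_hammingDist_restrict i x y]
  split_ifs <;> omega

theorem codeDist_puncture_le (hC : C.Nonempty) (i : ι) (x : ι → β) :
    codeDist (puncture C i) (fun j => x j) ≤ codeDist C x := by
  obtain ⟨c, hc, hdist⟩ := exists_hammingDist_eq_codeDist hC x
  calc codeDist (puncture C i) (fun j => x j)
      ≤ hammingDist (fun j : {j : ι // j ≠ i} => x j) (fun j => c j) :=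
        codeDist_le ⟨c, hc, fun _ => rfl⟩
    _ ≤ hammingDist x c := hammingDist_restrict_le i x c
    _ = codeDist C x := hdist

theorem codeDist_le_codeDist_puncture_add_one (hC : C.Nonempty) (i : ι) (x : ι → β) :
    codeDist C x ≤ codeDist (puncture C i) (fun j => x j) + 1 := by
  obtain ⟨w, ⟨c, hc, hw⟩, hdist⟩ :=
    exists_hammingDist_eq_codeDist (puncture_nonempty hC i) (fun j => x j)
  obtain rfl : w = fun j : {j : ι // j ≠ i} => c j := funext hw
  calc codeDist C x
      ≤ hammingDist x c := codeDist_le hc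
    _ ≤ hammingDist (fun j : {j : ι // j ≠ i} => x j) (fun j => c j) + 1 :=
        hammingDist_le_hammingDist_restrict_add_one i x c
    _ = codeDist (puncture C i) (fun j => x j) + 1 := by rw [hdist]

theorem coveringRadius_le_coveringRadius_puncture_add_one [Nonempty β] (hC : C.Nonempty)
    (i : ι) : coveringRadius C ≤ coveringRadius (puncture C i) + 1 := by
  obtain ⟨x, hx⟩ := exists_codeDist_eq_coveringRadius hC
  calc coveringRadius C
      = codeDist C x := hx.symm
    _ ≤ codeDist (puncture C i) (fun j => x j) + 1 := codeDist_le_codeDist_puncture_add_one hC i x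
    _ ≤ coveringRadius (puncture C i) + 1 :=
        Nat.add_le_add_right (codeDist_le_coveringRadius (puncture_nonempty hC i) _) 1

end Code

section Binary

variable {ι : Type*} [Fintype ι]

theorem natCast_hammingNorm_zmod_two (v : ι → ZMod 2) :
    (hammingNorm v : ZMod 2) = ∑ j, v j := by
  rw [hammingNorm, card_filter]
  push_cast
  refine sum_congr rfl fun j _ => ?_
  generalize v j = a
  revert a
  decide

theorem natCast_hammingDist_zmod_two (x y : ι → ZMod 2) :
    (hammingDist x y : ZMod 2) = hammingNorm x + hammingNorm y := by
  simp only [hammingDist_eq_hammingNorm, natCast_hammingNorm_zmod_two, Pi.add_apply,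
    Pi.neg_apply, CharTwo.neg_eq, sum_add_distrib]

theorem exists_restrict_eq_natCast_hammingNorm_eq [DecidableEq ι] (i : ι)
    (x' : {j : ι // j ≠ i} → ZMod 2) (p : ZMod 2) :
    ∃ x : ι → ZMod 2,
      (fun j : {j : ι // j ≠ i} => x j) = x' ∧ (hammingNorm x : ZMod 2) = p := by
  let x : ι → ZMod 2 := fun j => if h : j = i then p - ∑ k, x' k else x' ⟨j, h⟩
  have hrestrict : (fun j : {j : ι // j ≠ i} => x j) = x' := funext fun j => dif_neg j.2
  refine ⟨x, hrestrict, ?_⟩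
  rw [natCast_hammingNorm_zmod_two, Fintype.sum_eq_add_sum_subtype_ne _ i, hrestrict]
  simp [x]

variable [DecidableEq ι] {C : Set (ι → ZMod 2)}

theorem codeDist_puncture_lt_coveringRadius (hC : C.Nonempty)
    (heven : ∀ c ∈ C, Even (hammingNorm c)) (i : ι) (x' : {j : ι // j ≠ i} → ZMod 2) :
    codeDist (puncture C i) x' < coveringRadius C := by
  obtain ⟨x, rfl, hx⟩ :=
    exists_restrict_eq_natCast_hammingNorm_eq i x' (coveringRadius C + 1)
  obtain ⟨c, hc, hdist⟩ := exists_hammingDist_eq_codeDist hC x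
  have hparity : (hammingDist x c : ZMod 2) ≠ coveringRadius C := by
    rw [natCast_hammingDist_zmod_two, hx, ZMod.natCast_eq_zero_iff_even.2 (heven c hc)]
    simp
  have hlt : codeDist C x < coveringRadius C :=
    (codeDist_le_coveringRadius hC x).lt_of_ne fun h => hparity (by rw [hdist, h])
  exact (codeDist_puncture_le hC i x).trans_lt hlt

theorem coveringRadius_puncture_lt (hC : C.Nonempty) (heven : ∀ c ∈ C, Even (hammingNorm c))
    (i : ι) : coveringRadius (puncture C i) < coveringRadius C := by
  obtain ⟨x', hx'⟩ := exists_codeDist_eq_coveringRadius (puncture_nonempty hC i)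
  exact hx' ▸ codeDist_puncture_lt_coveringRadius hC heven i x'

end Binary

theorem stmt_10_general (n : ℕ) (C : Set (Fin n → ZMod 2)) (hC : C.Nonempty)
    (heven : ∀ c ∈ C, Even (hammingNorm c)) (ρ : ℕ)
    (hcov : sSup {r : ℕ | ∃ x : Fin n → ZMod 2,
        r = sInf {d : ℕ | ∃ c ∈ C, d = hammingDist x c}} = ρ)
    (i : Fin n) :
    sSup {r : ℕ | ∃ x : {j : Fin n // j ≠ i} → ZMod 2,
        r = sInf {d : ℕ | ∃ w ∈ {w : {j : Fin n // j ≠ i} → ZMod 2 |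
              ∃ c ∈ C, ∀ j : {j : Fin n // j ≠ i}, w j = c j.1},
            d = hammingDist x w}} = ρ - 1 := by
  change coveringRadius C = ρ at hcov
  change coveringRadius (puncture C i) = ρ - 1
  have hle := coveringRadius_le_coveringRadius_puncture_add_one hC i
  have hlt := coveringRadius_puncture_lt hC heven i
  omega

/-- If every codeword of a nonempty binary code C of length n ≥ 2 has even
Hamming weight and C has covering radius ρ ≥ 1, then puncturing C at any
fixed coordinate yields a code of covering radius exactly ρ − 1. -/
theorem stmt_10 (n : ℕ) (hn : 2 ≤ n) (C : Set (Fin n → ZMod 2)) (hC : C.Nonempty)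
    (heven : ∀ c ∈ C, Even (hammingNorm c)) (ρ : ℕ) (hρ : 1 ≤ ρ)
    (hcov : sSup {r : ℕ | ∃ x : Fin n → ZMod 2,
        r = sInf {d : ℕ | ∃ c ∈ C, d = hammingDist x c}} = ρ)
    (i : Fin n) :
    sSup {r : ℕ | ∃ x : {j : Fin n // j ≠ i} → ZMod 2,
        r = sInf {d : ℕ | ∃ w ∈ {w : {j : Fin n // j ≠ i} → ZMod 2 |
              ∃ c ∈ C, ∀ j : {j : Fin n // j ≠ i}, w j = c j.1},
            d = hammingDist x w}} = ρ - 1 :=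
  stmt_10_general n C hC heven ρ hcov i
end

section
/- There exists a binary linear [45, 5, 22] self-orthogonal code: an F_2-subspace C of F_2^45 with dim C = 5, such that x·y = 0 for all x, y ∈ C, every nonzero codeword of C has Hamming weight at least 22, and some codeword of C has Hamming weight exactly 22. -/
def Mgen : Matrix (Fin 5) (Fin 45) (ZMod 2) := Matrix.of
  ![![1,1,0,0,1,0,1,1,0,0,1,0,1,1,0,0,1,0,1,1,1,0,0,1,0,1,1,0,0,1,0,1,1,0,0,1,0,1,1,0,0,1,0,1,1],
    ![0,0,1,1,1,0,0,0,1,1,1,0,0,0,1,1,1,0,0,0,1,0,0,0,1,1,1,0,0,0,1,1,1,0,0,0,1,1,1,0,0,0,1,1,1],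
    ![0,0,0,0,0,1,1,1,1,1,1,0,0,0,0,0,0,1,1,1,1,0,0,0,0,0,0,1,1,1,1,1,1,0,0,0,0,0,0,1,1,1,1,1,1],
    ![0,0,0,0,0,0,0,0,0,0,0,1,1,1,1,1,1,1,1,1,1,0,0,0,0,0,0,0,0,0,0,0,0,1,1,1,1,1,1,1,1,1,1,1,1],
    ![0,0,0,0,0,0,0,0,0,0,0,0,0,0,0,0,0,0,0,0,0,1,1,1,1,1,1,1,1,1,1,1,1,1,1,1,1,1,1,1,1,1,1,1,1]]

set_option maxRecDepth 100000 in
lemma Mgen_orth : ∀ i k : Fin 5, ∑ j, Mgen i j * Mgen k j = 0 := by decide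

set_option maxRecDepth 100000 in
lemma Mgen_min : ∀ c : Fin 5 → ZMod 2, c ≠ 0 → 22 ≤ hammingNorm (Mgen.vecMul c) := by decide

set_option maxRecDepth 100000 in
lemma Mgen_wit : hammingNorm (Mgen.vecMul ![0,1,0,0,0]) = 22 := by decide

/-- There exists a binary linear [45, 5, 22] self-orthogonal code. -/
theorem stmt_11 :
    ∃ C : Submodule (ZMod 2) (Fin 45 → ZMod 2),
      Module.finrank (ZMod 2) C = 5 ∧
      (∀ x ∈ C, ∀ y ∈ C, ∑ j, x j * y j = (0 : ZMod 2)) ∧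
      (∀ x ∈ C, x ≠ 0 → 22 ≤ hammingNorm x) ∧
      (∃ x ∈ C, hammingNorm x = 22) := by
  refine ⟨LinearMap.range Mgen.vecMulLinear, ?_, ?_, ?_, ?_⟩
  · have hinj : Function.Injective Mgen.vecMulLinear := by
      rw [← LinearMap.ker_eq_bot, LinearMap.ker_eq_bot']
      intro c hc
      by_contra hne
      have h := Mgen_min c hne
      have hc' : Matrix.vecMul c Mgen = 0 := hc
      rw [hc'] at h
      simp at h
    rw [LinearMap.finrank_range_of_inj hinj]
    simp
  · rintro x ⟨c, rfl⟩ y ⟨d, rfl⟩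
    show ∑ j, Mgen.vecMul c j * Mgen.vecMul d j = 0
    calc ∑ j, Mgen.vecMul c j * Mgen.vecMul d j
        = ∑ j, ∑ i, ∑ k, (c i * Mgen i j) * (d k * Mgen k j) := by
          refine Finset.sum_congr rfl fun j _ => ?_
          rw [show Mgen.vecMul c j = ∑ i, c i * Mgen i j from rfl,
              show Mgen.vecMul d j = ∑ k, d k * Mgen k j from rfl,
              Finset.sum_mul_sum]
      _ = ∑ i, ∑ k, ∑ j, (c i * Mgen i j) * (d k * Mgen k j) := by
          rw [Finset.sum_comm]
          exact Finset.sum_congr rfl fun i _ => Finset.sum_comm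
      _ = ∑ i, ∑ k, (c i * d k) * ∑ j, Mgen i j * Mgen k j := by
          refine Finset.sum_congr rfl fun i _ => Finset.sum_congr rfl fun k _ => ?_
          rw [Finset.mul_sum]
          exact Finset.sum_congr rfl fun j _ => by ring
      _ = 0 := by simp [Mgen_orth]
  · rintro x ⟨c, rfl⟩ hne
    apply Mgen_min
    rintro rfl
    exact hne (map_zero _)
  · exact ⟨Mgen.vecMul ![0,1,0,0,0], ⟨![0,1,0,0,0], rfl⟩, Mgen_wit⟩
end

section
/- There exists a binary linear [53, 5, 26] self-orthogonal code: an F_2-subspace C of F_2^53 with dim C = 5, such that x·y = 0 for all x, y ∈ C, every nonzero codeword of C has Hamming weight at least 26, and some codeword of C has Hamming weight exactly 26. -/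
set_option maxRecDepth 100000

def rows12 : Fin 5 → Nat :=
  ![5407831134935347, 7943391439363644, 8937376003923904, 9006649532473344, 9007199221186560]

def G12 : Matrix (Fin 5) (Fin 53) (ZMod 2) :=
  Matrix.of fun i j => if Nat.testBit (rows12 i) j then 1 else 0

/-- There exists a binary linear [53, 5, 26] self-orthogonal code. -/
theorem stmt_12 :
    ∃ C : Submodule (ZMod 2) (Fin 53 → ZMod 2),
      Module.finrank (ZMod 2) C = 5 ∧
      (∀ x ∈ C, ∀ y ∈ C, ∑ j, x j * y j = (0 : ZMod 2)) ∧
      (∀ x ∈ C, x ≠ 0 → 26 ≤ hammingNorm x) ∧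
      (∃ x ∈ C, hammingNorm x = 26) := by
  refine ⟨LinearMap.range G12.vecMulLinear, ?_, ?_, ?_, ?_⟩
  · have hker : ∀ c : Fin 5 → ZMod 2, Matrix.vecMul c G12 = 0 → c = 0 := by decide
    have hinj : Function.Injective G12.vecMulLinear := by
      rw [← LinearMap.ker_eq_bot, LinearMap.ker_eq_bot']
      intro c hc
      exact hker c (by simpa [Matrix.vecMulLinear_apply] using hc)
    rw [LinearMap.finrank_range_of_inj hinj]
    simp [Module.finrank_pi]
  · have hGGT : G12 * G12.transpose = 0 := by decide
    rintro x ⟨c, rfl⟩ y ⟨d, rfl⟩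
    show dotProduct (G12.vecMulLinear c) (G12.vecMulLinear d) = 0
    rw [Matrix.vecMulLinear_apply, Matrix.vecMulLinear_apply]
    have hy : Matrix.vecMul d G12 = G12.transpose.mulVec d :=
      (Matrix.mulVec_transpose G12 d).symm
    rw [hy, Matrix.dotProduct_mulVec, Matrix.vecMul_vecMul,
      hGGT, Matrix.vecMul_zero, zero_dotProduct]
  · have hw : ∀ c : Fin 5 → ZMod 2, Matrix.vecMul c G12 ≠ 0 →
        26 ≤ hammingNorm (Matrix.vecMul c G12) := by decide
    rintro x ⟨c, rfl⟩ hx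
    rw [Matrix.vecMulLinear_apply] at hx ⊢
    exact hw c hx
  · refine ⟨G12.vecMulLinear ![0,1,0,0,0], ⟨_, rfl⟩, ?_⟩
    rw [Matrix.vecMulLinear_apply]
    decide
end

section
/- There exists a binary linear [60, 5, 30] self-orthogonal code: an F_2-subspace C of F_2^60 with dim C = 5, such that x·y = 0 for all x, y ∈ C, every nonzero codeword of C has Hamming weight at least 30, and some codeword of C has Hamming weight exactly 30. -/
set_option maxRecDepth 10000

/-- Generator matrix: two side-by-side copies of a punctured simplex `[30,5,15]` code. -/
def stmt13M : Matrix (Fin 5) (Fin 60) (ZMod 2) :=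
  fun i j => if ((j.val % 30 + 1) >>> i.val) % 2 = 1 then 1 else 0

lemma stmt13_col_dup (i : Fin 5) (j : Fin 30) :
    stmt13M i (Fin.castAdd 30 j) = stmt13M i (Fin.natAdd 30 j) := by
  simp [stmt13M, Fin.castAdd, Fin.natAdd, Nat.add_mod_left]

lemma stmt13_vec_dup (a : Fin 5 → ZMod 2) (j : Fin 30) :
    Matrix.vecMul a stmt13M (Fin.castAdd 30 j) = Matrix.vecMul a stmt13M (Fin.natAdd 30 j) := by
  simp only [Matrix.vecMul, dotProduct, stmt13_col_dup]

lemma stmt13_orth (a b : Fin 5 → ZMod 2) :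
    ∑ j, Matrix.vecMul a stmt13M j * Matrix.vecMul b stmt13M j = 0 := by
  have h : ∑ j : Fin (30 + 30), Matrix.vecMul a stmt13M j * Matrix.vecMul b stmt13M j = 0 := by
    rw [Fin.sum_univ_add]
    have key : ∀ j : Fin 30,
        Matrix.vecMul a stmt13M (Fin.castAdd 30 j) * Matrix.vecMul b stmt13M (Fin.castAdd 30 j)
        = Matrix.vecMul a stmt13M (Fin.natAdd 30 j) * Matrix.vecMul b stmt13M (Fin.natAdd 30 j) := by
      intro j; rw [stmt13_vec_dup a j, stmt13_vec_dup b j]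
    rw [Finset.sum_congr rfl (fun j _ => key j)]
    exact CharTwo.add_self_eq_zero _
  exact h

lemma stmt13_inj : ∀ a : Fin 5 → ZMod 2, Matrix.vecMul a stmt13M = 0 → a = 0 := by decide

lemma stmt13_wt : ∀ a : Fin 5 → ZMod 2, a ≠ 0 →
    30 ≤ hammingNorm (Matrix.vecMul a stmt13M) := by decide

lemma stmt13_wt30 :
    hammingNorm (Matrix.vecMul (fun i => if i = 0 then 1 else 0 : Fin 5 → ZMod 2) stmt13M)
      = 30 := by decide

/-- There exists a binary linear [60, 5, 30] self-orthogonal code. -/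
theorem stmt_13 :
    ∃ C : Submodule (ZMod 2) (Fin 60 → ZMod 2),
      Module.finrank (ZMod 2) C = 5 ∧
      (∀ x ∈ C, ∀ y ∈ C, ∑ j, x j * y j = (0 : ZMod 2)) ∧
      (∀ x ∈ C, x ≠ 0 → 30 ≤ hammingNorm x) ∧
      (∃ x ∈ C, hammingNorm x = 30) := by
  refine ⟨LinearMap.range stmt13M.vecMulLinear, ?_, ?_, ?_, ?_⟩
  · have hinj : Function.Injective stmt13M.vecMulLinear := by
      rw [← LinearMap.ker_eq_bot, LinearMap.ker_eq_bot']
      intro a ha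
      exact stmt13_inj a (by simpa [Matrix.vecMulLinear_apply] using ha)
    rw [LinearMap.finrank_range_of_inj hinj]
    simp
  · rintro x ⟨a, rfl⟩ y ⟨b, rfl⟩
    simpa [Matrix.vecMulLinear_apply] using stmt13_orth a b
  · rintro x ⟨a, rfl⟩ hx
    have ha : a ≠ 0 := by
      rintro rfl; exact hx (by simp)
    simpa [Matrix.vecMulLinear_apply] using stmt13_wt a ha
  · refine ⟨stmt13M.vecMulLinear (fun i => if i = 0 then 1 else 0), ⟨_, rfl⟩, ?_⟩
    simpa [Matrix.vecMulLinear_apply] using stmt13_wt30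
end

section
/- There exists a binary linear [76, 5, 38] self-orthogonal code: an F_2-subspace C of F_2^76 with dim C = 5, such that x·y = 0 for all x, y ∈ C, every nonzero codeword of C has Hamming weight at least 38, and some codeword of C has Hamming weight exactly 38. -/
set_option maxRecDepth 10000
private def colsList : Fin 76 → ℕ :=
  ![1, 2, 2, 3, 3, 3, 4, 4, 5, 5, 5, 6, 6, 7, 7, 7, 8, 8, 8, 9, 9, 10, 10, 10,
    11, 11, 12, 12, 12, 13, 13, 14, 14, 14, 15, 15, 16, 16, 17, 17, 17, 18, 18,
    19, 19, 19, 20, 20, 21, 21, 21, 22, 22, 23, 23, 23, 24, 24, 24, 25, 25, 26,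
    26, 26, 27, 27, 28, 28, 28, 29, 29, 30, 30, 30, 31, 31]

private def G : Matrix (Fin 5) (Fin 76) (ZMod 2) :=
  Matrix.of fun i j => if Nat.testBit (colsList j) i then 1 else 0

private lemma key_inj : ∀ c : Fin 5 → ZMod 2, G.vecMul c = 0 → c = 0 := by decide

private lemma gen_orth : ∀ a b : Fin 5, ∑ j, G a j * G b j = (0 : ZMod 2) := by decide

private lemma key_orth (c d : Fin 5 → ZMod 2) :
    ∑ j, G.vecMul c j * G.vecMul d j = (0 : ZMod 2) := by
  simp only [Matrix.vecMul, dotProduct]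
  simp_rw [Finset.sum_mul, Finset.mul_sum]
  rw [Finset.sum_comm]
  refine Finset.sum_eq_zero fun i _ => ?_
  rw [Finset.sum_comm]
  refine Finset.sum_eq_zero fun k _ => ?_
  simp_rw [mul_mul_mul_comm, ← Finset.mul_sum, gen_orth, mul_zero]

private lemma key_min : ∀ c : Fin 5 → ZMod 2, c ≠ 0 → 38 ≤ hammingNorm (G.vecMul c) := by
  decide

private lemma key_eq : hammingNorm (G.vecMul ![1,0,0,0,0]) = 38 := by decide

/-- There exists a binary linear [76, 5, 38] self-orthogonal code. -/
theorem stmt_14 :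
    ∃ C : Submodule (ZMod 2) (Fin 76 → ZMod 2),
      Module.finrank (ZMod 2) C = 5 ∧
      (∀ x ∈ C, ∀ y ∈ C, ∑ j, x j * y j = (0 : ZMod 2)) ∧
      (∀ x ∈ C, x ≠ 0 → 38 ≤ hammingNorm x) ∧
      (∃ x ∈ C, hammingNorm x = 38) := by
  refine ⟨LinearMap.range G.vecMulLinear, ?_, ?_, ?_, ?_⟩
  · rw [LinearMap.finrank_range_of_inj]
    · simp
    · rw [injective_iff_map_eq_zero]
      intro c hc
      exact key_inj c (by simpa [Matrix.vecMulLinear_apply] using hc)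
  · rintro x ⟨c, rfl⟩ y ⟨d, rfl⟩
    simpa [Matrix.vecMulLinear_apply] using key_orth c d
  · rintro x ⟨c, rfl⟩ hx
    refine key_min c ?_
    rintro rfl
    exact hx (by simp)
  · exact ⟨G.vecMul ![1,0,0,0,0], ⟨![1,0,0,0,0], by simp [Matrix.vecMulLinear_apply]⟩, key_eq⟩
end

section
/- There exists a binary linear [47, 6, 22] self-orthogonal code: an F_2-subspace C of F_2^47 with dim C = 6, such that x·y = 0 for all x, y ∈ C, every nonzero codeword of C has Hamming weight at least 22, and some codeword of C has Hamming weight exactly 22. -/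
set_option maxRecDepth 100000
set_option maxHeartbeats 2000000

private def cols16 : Fin 47 → ℕ :=
  ![2, 4, 5, 8, 9, 10, 11, 13, 14, 20, 23, 25, 27, 30, 31, 32, 33, 34, 35, 36,
    37, 38, 39, 40, 41, 42, 43, 44, 45, 46, 47, 48, 49, 50, 51, 52, 53, 54, 55,
    56, 57, 58, 59, 60, 61, 62, 63]

private def G16 : Fin 6 → Fin 47 → ZMod 2 :=
  fun i j => if Nat.testBit (cols16 j) i.val then 1 else 0

private lemma G16_orth : ∀ i k : Fin 6, ∑ j, G16 i j * G16 k j = 0 := by decide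

private lemma G16_li : LinearIndependent (ZMod 2) G16 := by
  rw [Fintype.linearIndependent_iff]
  decide

private lemma G16_wt : ∀ c : Fin 6 → ZMod 2,
    (∑ i, c i • G16 i) ≠ 0 → 22 ≤ hammingNorm (∑ i, c i • G16 i) := by decide

private lemma G16_wt22 : hammingNorm (∑ i, (![1,0,0,1,0,0] : Fin 6 → ZMod 2) i • G16 i) = 22 := by
  decide

/-- There exists a binary linear [47, 6, 22] self-orthogonal code. -/
theorem stmt_16 :
    ∃ C : Submodule (ZMod 2) (Fin 47 → ZMod 2),
      Module.finrank (ZMod 2) C = 6 ∧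
      (∀ x ∈ C, ∀ y ∈ C, ∑ j, x j * y j = (0 : ZMod 2)) ∧
      (∀ x ∈ C, x ≠ 0 → 22 ≤ hammingNorm x) ∧
      (∃ x ∈ C, hammingNorm x = 22) := by
  refine ⟨Submodule.span (ZMod 2) (Set.range G16), ?_, ?_, ?_, ?_⟩
  · rw [finrank_span_eq_card G16_li]
    simp
  · intro x hx y hy
    rw [Submodule.mem_span_range_iff_exists_fun (ZMod 2)] at hx hy
    obtain ⟨c, rfl⟩ := hx
    obtain ⟨d, rfl⟩ := hy
    have : ∀ j, (∑ i, c i • G16 i) j * (∑ i, d i • G16 i) j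
        = ∑ i, ∑ k, c i * d k * (G16 i j * G16 k j) := by
      intro j
      simp only [Finset.sum_apply, Pi.smul_apply, smul_eq_mul, Finset.sum_mul_sum]
      refine Finset.sum_congr rfl fun i _ => Finset.sum_congr rfl fun k _ => by ring
    simp_rw [this]
    rw [Finset.sum_comm]
    rw [Finset.sum_congr rfl fun i _ => Finset.sum_comm]
    simp_rw [← Finset.mul_sum, G16_orth, mul_zero, Finset.sum_const_zero]
  · intro x hx hx0
    rw [Submodule.mem_span_range_iff_exists_fun (ZMod 2)] at hx
    obtain ⟨c, rfl⟩ := hx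
    exact G16_wt c hx0
  · refine ⟨∑ i, (![1,0,0,1,0,0] : Fin 6 → ZMod 2) i • G16 i, ?_, G16_wt22⟩
    rw [Submodule.mem_span_range_iff_exists_fun (ZMod 2)]
    exact ⟨_, rfl⟩
end
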